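/- arXiv:0902.4755 — 7 statements merged into one kernel-verified Lean document; each statement's English description precedes it below -/
import Mathlib

section
/- For every positive integer n there exists a square-free (aperiodic) word of length n over a three-letter alphabet. -/
/-- A finite word is square-free if it contains no factor `y ++ y` with `y` nonempty. -/
def SquareFreeWord {α : Type*} (l : List α) : Prop :=
  ∀ x y z : List α, l = x ++ y ++ y ++ z → y = []

/-- The Thue–Morse sequence: parity of the binary digit sum. -/
private def tm (n : ℕ) : Bool := (Nat.digits 2 n).sum % 2 == 1

private lemma tm_two_mul (n : ℕ) : tm (2 * n) = tm n := by
  rcases Nat.eq_zero_or_pos n with h | h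
  · simp [h]
  · unfold tm
    rw [Nat.digits_def' (by norm_num : (1:ℕ) < 2) (by omega)]
    simp [Nat.mul_mod_right, Nat.mul_div_cancel_left _ (by norm_num : (0:ℕ) < 2)]

private lemma tm_two_mul_add_one (n : ℕ) : tm (2 * n + 1) = !tm n := by
  unfold tm
  rw [Nat.digits_def' (by norm_num : (1:ℕ) < 2) (by omega)]
  have h1 : (2 * n + 1) % 2 = 1 := by omega
  have h2 : (2 * n + 1) / 2 = n := by omega
  rw [h1, h2]
  rcases Nat.mod_two_eq_zero_or_one (Nat.digits 2 n).sum with h | h <;>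
    simp [List.sum_cons, Nat.add_mod, h]

private lemma pair_odd {k : ℕ} (h : tm k = tm (k + 1)) : k % 2 = 1 := by
  rcases Nat.even_or_odd k with ⟨m, hm⟩ | hk
  · exfalso
    have h1 : k = 2 * m := by omega
    have h2 : k + 1 = 2 * m + 1 := by omega
    rw [h1] at h
    rw [tm_two_mul, tm_two_mul_add_one] at h
    cases hm' : tm m <;> simp [hm'] at h
  · obtain ⟨m, hm⟩ := hk
    omega

/-- An overlap of period `p` at position `i` in the Thue–Morse sequence. -/
private def Ov (p i : ℕ) : Prop := ∀ n, i ≤ n → n ≤ i + p → tm (n + p) = tm n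

private lemma no_ov : ∀ p, 0 < p → ∀ i, ¬ Ov p i := by
  intro p
  induction p using Nat.strong_induction_on with
  | _ p IH =>
    intro hp i H
    rcases Nat.even_or_odd p with ⟨q, hq⟩ | ⟨r, hr⟩
    · -- even period: reduce to period q
      have hq1 : 0 < q := by omega
      apply IH q (by omega) hq1 (i / 2)
      intro m h1 h2
      by_cases hc : i ≤ 2 * m
      · have h3 := H (2 * m) hc (by omega)
        rw [show 2 * m + p = 2 * (m + q) by omega] at h3
        rwa [tm_two_mul, tm_two_mul] at h3
      · have h3 := H (2 * m + 1) (by omega) (by omega)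
        rw [show 2 * m + 1 + p = 2 * (m + q) + 1 by omega] at h3
        rw [tm_two_mul_add_one, tm_two_mul_add_one] at h3
        simpa using h3
    · -- odd period
      by_cases hpair : ∃ k, i ≤ k ∧ k + 1 ≤ i + p ∧ tm k = tm (k + 1)
      · obtain ⟨k, hk1, hk2, hk3⟩ := hpair
        have e1 := H k hk1 (by omega)
        have e2 := H (k + 1) (by omega) hk2
        have o1 : k % 2 = 1 := pair_odd hk3
        have o2 : (k + p) % 2 = 1 := by
          apply pair_odd
          rw [e1, hk3, ← e2]
          congr 1
          omega
        omega
      · push_neg at hpair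
        -- the window alternates
        have step : ∀ k, i ≤ k → k + 1 ≤ i + p → tm (k + 1) = !tm k := by
          intro k h1 h2
          have := hpair k h1 h2
          cases h3 : tm k <;> cases h4 : tm (k + 1) <;> simp_all
        have alt : ∀ j, j ≤ p → tm (i + j) = (decide (j % 2 = 1)).xor (tm i) := by
          intro j
          induction j with
          | zero => simp
          | succ j ih =>
            intro hj
            have h1 := step (i + j) (by omega) (by omega)
            rw [show i + (j + 1) = i + j + 1 by omega, h1, ih (by omega)]
            rcases Nat.mod_two_eq_zero_or_one j with h | h <;>
              · have : (j + 1) % 2 = 1 - j % 2 := by omega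
                cases htmi : tm i <;> simp [this, h]
        have h1 := H i le_rfl (by omega)
        have h2 := alt p le_rfl
        have h3 : p % 2 = 1 := by omega
        rw [h3] at h2
        rw [h1] at h2
        cases htmi : tm i <;> simp [htmi] at h2

private def e (n : ℕ) : ℤ := if tm n then 1 else 0

/-- Coding of a pair of consecutive Thue–Morse letters by their difference. -/
private def code : Bool → Bool → Fin 3
  | false, false => 1
  | true, true => 1
  | true, false => 0
  | false, true => 2

/-- The ternary word: first difference of Thue–Morse, shifted to `Fin 3`. -/
private def d (n : ℕ) : Fin 3 := code (tm n) (tm (n + 1))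

private lemma code_eq : ∀ a b a' b' : Bool, code a b = code a' b' →
    (if b then (1:ℤ) else 0) - (if a then 1 else 0)
      = (if b' then 1 else 0) - (if a' then 1 else 0) := by decide

private lemma d_eq {m m' : ℕ} (h : d m = d m') :
    e (m + 1) - e m = e (m' + 1) - e m' :=
  code_eq _ _ _ _ h

private lemma e_bound (n : ℕ) : e n = 0 ∨ e n = 1 := by
  unfold e; split <;> simp

private lemma e_inj {a b : ℕ} (h : e a = e b) : tm a = tm b := by
  unfold e at h
  cases h1 : tm a <;> cases h2 : tm b <;> simp_all

private lemma no_index_square (i p : ℕ) (hp : 0 < p)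
    (h : ∀ j < p, d (i + j) = d (i + p + j)) : False := by
  have key : ∀ k, k ≤ p → e (i + p + k) - e (i + k) = e (i + p) - e i := by
    intro k
    induction k with
    | zero => intro _; simp
    | succ k ih =>
      intro hk
      have hd := d_eq (h k (by omega))
      have ih' := ih (by omega)
      rw [show i + p + (k + 1) = i + p + k + 1 by omega,
        show i + (k + 1) = i + k + 1 by omega]
      linarith
  have h2p := key p le_rfl
  have b1 := e_bound i
  have b2 := e_bound (i + p)
  have b3 := e_bound (i + p + p)
  have hc : e (i + p) = e i := by omega
  apply no_ov p hp i
  intro n h1 h2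
  have hk := key (n - i) (by omega)
  rw [show i + p + (n - i) = n + p by omega, show i + (n - i) = n by omega] at hk
  apply e_inj
  omega

/-- For every `n` there exists a square-free word of length `n` over a
three-letter alphabet. -/
theorem stmt_3 (n : ℕ) : ∃ w : List (Fin 3), w.length = n ∧ SquareFreeWord w := by
  refine ⟨(List.range n).map d, by simp, ?_⟩
  intro x y z hw
  by_contra hy
  have hp : 0 < y.length := List.length_pos_iff.mpr hy
  have hlen : n = x.length + y.length + y.length + z.length := by
    have := congrArg List.length hw
    simp at this
    omega
  have hw' : (List.range n).map d = x ++ (y ++ (y ++ z)) := by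
    simpa [List.append_assoc] using hw
  apply no_index_square x.length y.length hp
  intro j hj
  have hk1 : x.length + j < n := by omega
  have hk2 : x.length + y.length + j < n := by omega
  have g1 : some (d (x.length + j)) = y[j]? := by
    have : ((List.range n).map d)[x.length + j]? = some (d (x.length + j)) := by
      simp [List.getElem?_map, List.getElem?_range hk1]
    rw [hw'] at this
    rw [List.getElem?_append_right (by omega : x.length ≤ x.length + j)] at this
    rw [show x.length + j - x.length = j by omega] at this
    rw [List.getElem?_append_left (by omega : j < y.length)] at this
    exact this.symm
  have g2 : some (d (x.length + y.length + j)) = y[j]? := by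
    have : ((List.range n).map d)[x.length + y.length + j]? = some (d (x.length + y.length + j)) := by
      simp [List.getElem?_map, List.getElem?_range hk2]
    rw [hw'] at this
    rw [List.getElem?_append_right (by omega : x.length ≤ x.length + y.length + j)] at this
    rw [show x.length + y.length + j - x.length = y.length + j by omega] at this
    rw [List.getElem?_append_right (by omega : y.length ≤ y.length + j)] at this
    rw [show y.length + j - y.length = j by omega] at this
    rw [List.getElem?_append_left (by omega : j < y.length)] at this
    exact this.symm
  have := g1.trans g2.symm
  exact Option.some.inj this
end

section
/- Let T be an infinite rooted tree in which every vertex has exactly two children (together with one edge to its parent, except the root). Then one can label each edge of T with one of three letters A, B, C such that the sequence of labels along any simple path in T is 3-aperiodic, i.e., contains no 4 consecutive identical blocks. -/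
/-- A list is `k`-aperiodic if it contains no factor of the form `y^(k+1)` with `y` nonempty. -/
def KAperiodic {α : Type*} (k : ℕ) (l : List α) : Prop :=
  ∀ x y z : List α, l = x ++ (List.replicate (k + 1) y).flatten ++ z → y = []

namespace Stmt4Aux

/-- The Thue–Morse sequence. -/
def t (n : ℕ) : Bool :=
  if h : n = 0 then false else xor (n % 2 == 1) (t (n / 2))
termination_by n
decreasing_by exact Nat.div_lt_self (Nat.pos_of_ne_zero h) one_lt_two

lemma t_two_mul (a : ℕ) : t (2 * a) = t a := by
  rcases Nat.eq_zero_or_pos a with h | h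
  · simp [h]
  · rw [t]
    have h1 : 2 * a ≠ 0 := by omega
    have h2 : 2 * a % 2 = 0 := by omega
    have h3 : 2 * a / 2 = a := by omega
    simp [h1, h2, h3]

lemma t_two_mul_add_one (a : ℕ) : t (2 * a + 1) = !(t a) := by
  rw [t]
  have h2 : (2 * a + 1) % 2 = 1 := by omega
  have h3 : (2 * a + 1) / 2 = a := by omega
  simp [h2, h3, Bool.xor_comm]

lemma t_ne (a : ℕ) : t (2 * a) ≠ t (2 * a + 1) := by
  simp [t_two_mul, t_two_mul_add_one]

lemma no_three (a : ℕ) : ¬ (t a = t (a + 1) ∧ t (a + 1) = t (a + 2)) := by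
  rintro ⟨h1, h2⟩
  rcases Nat.even_or_odd a with ⟨b, hb⟩ | ⟨b, hb⟩
  · apply t_ne b
    rw [show 2 * b = a by omega]
    exact h1
  · apply t_ne (b + 1)
    rw [show 2 * (b + 1) = a + 1 by omega]
    exact h2

/-- The Thue–Morse sequence is overlap-free. -/
theorem no_overlap : ∀ k, 1 ≤ k → ∀ m, ¬ (∀ j ≤ k, t (m + j) = t (m + j + k)) := by
  intro k
  induction k using Nat.strong_induction_on with
  | _ k IH =>
    intro hk m H
    rcases Nat.even_or_odd k with ⟨k', hk'⟩ | ⟨h, hh⟩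
    · -- k = 2k', k' ≥ 1
      have hk'1 : 1 ≤ k' := by omega
      have hk'lt : k' < k := by omega
      rcases Nat.even_or_odd m with ⟨m', hm⟩ | ⟨m', hm⟩
      · apply IH k' hk'lt hk'1 m'
        intro j hj
        have := H (2 * j) (by omega)
        rw [show m + 2 * j + k = 2 * (m' + j + k') by omega,
            show m + 2 * j = 2 * (m' + j) by omega,
            t_two_mul, t_two_mul] at this
        exact this
      · apply IH k' hk'lt hk'1 m'
        intro j hj
        have := H (2 * j) (by omega)
        rw [show m + 2 * j + k = 2 * (m' + j + k') + 1 by omega,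
            show m + 2 * j = 2 * (m' + j) + 1 by omega,
            t_two_mul_add_one, t_two_mul_add_one] at this
        simpa using this
    · -- k odd
      rcases Nat.eq_or_lt_of_le hk with h1 | h3
      · -- k = 1
        have H0 := H 0 (by omega)
        have H1 := H 1 (by omega)
        rw [← h1] at H0 H1
        simp only [Nat.add_zero] at H0
        rcases Nat.even_or_odd m with ⟨b, hb⟩ | ⟨b, hb⟩
        · apply t_ne b
          rw [show 2 * b = m by omega]
          exact H0
        · apply t_ne (b + 1)
          rw [show 2 * (b + 1) = m + 1 by omega]
          exact H1
      · -- k odd ≥ 3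
        have hk3 : 3 ≤ k := by omega
        have H0 := H 0 (by omega)
        have H1 := H 1 (by omega)
        have H2 := H 2 (by omega)
        have H3 := H 3 (by omega)
        simp only [Nat.add_zero] at H0
        rcases Nat.even_or_odd m with ⟨i, hm⟩ | ⟨i, hm⟩
        · -- m = 2i
          rw [show m + k = 2 * (i + h) + 1 by omega, show m = 2 * i by omega,
              t_two_mul, t_two_mul_add_one] at H0
          rw [show m + 1 + k = 2 * (i + h + 1) by omega, show m + 1 = 2 * i + 1 by omega,
              t_two_mul_add_one, t_two_mul] at H1
          rw [show m + 2 + k = 2 * (i + h + 1) + 1 by omega, show m + 2 = 2 * (i + 1) by omega,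
              t_two_mul, t_two_mul_add_one] at H2
          rw [show m + 3 + k = 2 * (i + h + 2) by omega, show m + 3 = 2 * (i + 1) + 1 by omega,
              t_two_mul_add_one, t_two_mul] at H3
          apply no_three (i + h)
          constructor
          · rw [← H1, H0]; simp
          · rw [← H1, ← H3, H2, ← H1]; simp
        · -- m = 2i+1
          rw [show m + k = 2 * (i + h + 1) by omega, show m = 2 * i + 1 by omega,
              t_two_mul_add_one, t_two_mul] at H0
          rw [show m + 1 + k = 2 * (i + h + 1) + 1 by omega, show m + 1 = 2 * (i + 1) by omega,
              t_two_mul, t_two_mul_add_one] at H1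
          rw [show m + 2 + k = 2 * (i + h + 2) by omega, show m + 2 = 2 * (i + 1) + 1 by omega,
              t_two_mul_add_one, t_two_mul] at H2
          rw [show m + 3 + k = 2 * (i + h + 2) + 1 by omega, show m + 3 = 2 * (i + 2) by omega,
              t_two_mul, t_two_mul_add_one] at H3
          apply no_three i
          constructor
          · rw [H1, ← H0]; simp
          · rw [H3, ← H2]; simp

/-- The ternary word coding the first difference of Thue–Morse. -/
def w (n : ℕ) : Fin 3 := if t n = t (n + 1) then 0 else if t n then 1 else 2

lemma key3 : ∀ x1 x2 y1 y2 : Bool,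
    (if x1 = x2 then (0 : Fin 3) else if x1 then 1 else 2) =
      (if y1 = y2 then (0 : Fin 3) else if y1 then 1 else 2) →
    ((x1 = y1 → x2 = y2) ∧ (x1 ≠ y1 → x2 = x1 ∧ y2 = y1)) := by decide

/-- The word `w` is squarefree. -/
lemma sqfree : ∀ b k, 1 ≤ k → ∃ j, j < k ∧ w (b + j) ≠ w (b + j + k) := by
  intro b k hk
  by_contra hcon
  push_neg at hcon
  have main : ∀ j ≤ k,
      (t (b + j) = t (b + j + k) ∧ t b = t (b + k)) ∨
      (t (b + j) = t b ∧ t (b + j + k) = t (b + k) ∧ t b ≠ t (b + k)) := by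
    intro j hj
    induction j with
    | zero =>
      by_cases h : t b = t (b + k)
      · exact Or.inl ⟨by simpa using h, h⟩
      · exact Or.inr ⟨rfl, rfl, h⟩
    | succ j ihj =>
      rw [show b + (j + 1) + k = b + j + k + 1 by omega, show b + (j + 1) = b + j + 1 by omega]
      have hjk : j < k := by omega
      have hw := hcon j hjk
      have hkey := key3 (t (b + j)) (t (b + j + 1)) (t (b + j + k)) (t (b + j + k + 1)) hw
      rcases ihj (by omega) with ⟨he, hc⟩ | ⟨h1, h2, hc⟩
      · left
        refine ⟨?_, hc⟩
        exact hkey.1 he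
      · right
        have hne : t (b + j) ≠ t (b + j + k) := by rw [h1, h2]; exact hc
        obtain ⟨e1, e2⟩ := hkey.2 hne
        exact ⟨by rw [e1, h1], by rw [e2, h2], hc⟩
  rcases main k le_rfl with ⟨_, hc0⟩ | ⟨h1, _, hc⟩
  · apply no_overlap k hk b
    intro j hj
    rcases main j hj with ⟨he, _⟩ | ⟨_, _, hne⟩
    · exact he
    · exact absurd hc0 hne
  · exact hc h1.symm

lemma len_flat {α : Type*} (y : List α) (m : ℕ) :
    ((List.replicate m y).flatten).length = m * y.length := by
  induction m with
  | zero => simp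
  | succ m ih => simp [List.replicate_succ, ih]; ring

lemma getElem_flat {α : Type*} (y : List α) (m i : ℕ)
    (h : i < ((List.replicate m y).flatten).length) (h2 : i % y.length < y.length) :
    ((List.replicate m y).flatten)[i] = y[i % y.length] := by
  induction m generalizing i with
  | zero => simp [len_flat] at h
  | succ m ih =>
    have hlen := len_flat y (m + 1)
    have hlen' := len_flat y m
    have he : (List.replicate (m + 1) y).flatten = y ++ (List.replicate m y).flatten := by
      simp [List.replicate_succ]
    rw [List.getElem_of_eq he h]
    by_cases hi : i < y.length
    · rw [List.getElem_append_left hi]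
      congr 1
      exact (Nat.mod_eq_of_lt hi).symm
    · push_neg at hi
      rw [List.getElem_append_right hi]
      have hmul : (m + 1) * y.length = m * y.length + y.length := by ring
      rw [ih (i - y.length) (by omega) (by rw [← Nat.mod_eq_sub_mod hi]; exact h2)]
      congr 1
      exact (Nat.mod_eq_sub_mod hi).symm

lemma getElem_concat_mid {α : Type*} (x r z : List α) (n i : ℕ) (hn : n = x.length + i)
    (hi : i < r.length) (h : n < (x ++ r ++ z).length) :
    (x ++ r ++ z)[n] = r[i] := by
  subst hn
  have he : x ++ r ++ z = x ++ (r ++ z) := by simp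
  rw [List.getElem_of_eq he h]
  rw [List.getElem_append_right (by omega)]
  rw [List.getElem_append_left (by omega : x.length + i - x.length < r.length)]
  · congr 1
    omega

lemma periodic_extract {α : Type*} (l x y z : List α)
    (hl : l = x ++ (List.replicate 4 y).flatten ++ z) (i : ℕ) (hi : i < 3 * y.length)
    (h1 : x.length + i < l.length) (h2 : x.length + i + y.length < l.length) :
    l[x.length + i] = l[x.length + i + y.length] := by
  have hy : 0 < y.length := by omega
  have hflen := len_flat y 4
  rw [List.getElem_of_eq hl h1, List.getElem_of_eq hl h2]
  rw [getElem_concat_mid x _ z _ i rfl (by omega) (by rw [← hl]; omega),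
      getElem_concat_mid x _ z _ (i + y.length) (by omega) (by omega)
        (by rw [← hl]; omega)]
  rw [getElem_flat y 4 i (by omega) (Nat.mod_lt _ hy),
      getElem_flat y 4 (i + y.length) (by omega) (Nat.mod_lt _ hy)]
  congr 1
  rw [Nat.add_mod_right]

end Stmt4Aux

open Stmt4Aux

/-- The infinite rooted binary tree (vertices: finite binary strings, a vertex `v`
has the two children `b :: v`) admits a labeling of its edges (an edge is
identified with its lower endpoint) by three letters such that the label sequence
along any simple path is 3-aperiodic. -/
theorem stmt_4 :
    ∃ L : List Bool → Fin 3,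
      ∀ (n : ℕ) (p : Fin (n + 1) → List Bool),
        (∀ i : Fin n,
          (∃ b, p i.succ = b :: p i.castSucc) ∨ (∃ b, p i.castSucc = b :: p i.succ)) →
        Function.Injective p →
        KAperiodic 3 (List.ofFn fun i : Fin n =>
          if (p i.castSucc).length < (p i.succ).length then L (p i.succ)
          else L (p i.castSucc)) := by
  classical
  refine ⟨fun v => w v.length, ?_⟩
  intro n p hadj hinj x y z hl
  by_contra hy
  have hk1 : 1 ≤ y.length := List.length_pos_iff.mpr hy
  set k := y.length with hkdef
  -- the labeling function along the path
  set F : Fin n → Fin 3 := fun i =>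
    if (p i.castSucc).length < (p i.succ).length then w (p i.succ).length
    else w (p i.castSucc).length with hFdef
  have hl' : List.ofFn F = x ++ (List.replicate (3 + 1) y).flatten ++ z := hl
  set s := x.length with hsdef
  have hn : n = s + 4 * k + z.length := by
    have hc := congrArg List.length hl'
    rw [List.length_ofFn, List.length_append, List.length_append, len_flat] at hc
    omega
  -- vertices along the path, as a function on ℕ
  set P : ℕ → List Bool := fun i => if h : i < n + 1 then p ⟨i, h⟩ else [] with hPset
  have hPdef : ∀ i (h : i ≤ n), P i = p ⟨i, Nat.lt_succ_of_le h⟩ := by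
    intro i h
    simp only [hPset]
    rw [dif_pos (Nat.lt_succ_of_le h)]
  set ℓ : ℕ → ℕ := fun i => (P i).length with hldef
  have hadj' : ∀ i, i < n → (∃ b, P (i + 1) = b :: P i) ∨ (∃ b, P i = b :: P (i + 1)) := by
    intro i hi
    have h1 : p (⟨i, hi⟩ : Fin n).castSucc = P i := by
      rw [hPdef i (by omega)]
      congr 1
    have h2 : p (⟨i, hi⟩ : Fin n).succ = P (i + 1) := by
      rw [hPdef (i + 1) (by omega)]
      congr 1
    have := hadj ⟨i, hi⟩
    rw [h1, h2] at this
    exact this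
  have hinj' : ∀ i j, i ≤ n → j ≤ n → P i = P j → i = j := by
    intro i j hi hj hij
    rw [hPdef i hi, hPdef j hj] at hij
    simpa using congrArg Fin.val (hinj hij)
  -- the turning point of the path
  have hex : ∃ i, n ≤ i ∨ ∃ b, P (i + 1) = b :: P i := ⟨n, Or.inl le_rfl⟩
  set m := Nat.find hex with hmdef
  have hmn : m ≤ n := Nat.find_le (Or.inl le_rfl)
  have hup : ∀ i, i < m → ∃ b, P i = b :: P (i + 1) := by
    intro i him
    have hni := Nat.find_min hex him
    push_neg at hni
    rcases hadj' i (by omega) with hD | hU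
    · obtain ⟨b0, hb0⟩ := hD
      exact absurd hb0 (hni.2 b0)
    · exact hU
  have hltn : ∀ i, i < m → i < n := by
    intro i him
    have hni := Nat.find_min hex him
    push_neg at hni
    omega
  have hdownAux : ∀ j, m + j < n → ∃ b, P (m + j + 1) = b :: P (m + j) := by
    intro j
    induction j with
    | zero =>
      intro hjn
      rcases Nat.find_spec hex with h | h
      · rw [← hmdef] at h; omega
      · rw [← hmdef] at h; simpa using h
    | succ j ihj =>
      intro hjn
      obtain ⟨b, hb⟩ := ihj (by omega)
      rcases hadj' (m + j + 1) (by omega) with hD | hU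
      · rw [show m + (j + 1) = m + j + 1 by omega]
        exact hD
      · exfalso
        obtain ⟨c, hc⟩ := hU
        rw [hb] at hc
        have : P (m + j) = P (m + j + 1 + 1) := by
          injection hc with _ h2
        have := hinj' _ _ (by omega) (by omega) this
        omega
  have hdown : ∀ i, m ≤ i → i < n → ∃ b, P (i + 1) = b :: P i := by
    intro i hmi hin
    have := hdownAux (i - m) (by omega)
    rw [show m + (i - m) = i by omega] at this
    exact this
  -- length formulas
  have lA : ∀ j i, i + j ≤ m → ℓ i = ℓ (i + j) + j := by
    intro j
    induction j with
    | zero => intro i _; simp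
    | succ j ihj =>
      intro i hijm
      obtain ⟨b, hb⟩ := hup i (by omega)
      have e1 : ℓ i = ℓ (i + 1) + 1 := by
        simp only [hldef, hb, List.length_cons]
      have e2 := ihj (i + 1) (by omega)
      rw [show i + 1 + j = i + (j + 1) by omega] at e2
      omega
  have lB : ∀ j i, m ≤ i → i + j ≤ n → ℓ (i + j) = ℓ i + j := by
    intro j
    induction j with
    | zero => intro i _ _; simp
    | succ j ihj =>
      intro i hmi hijn
      obtain ⟨b, hb⟩ := hdown (i + j) (by omega) (by omega)
      have e1 : ℓ (i + j + 1) = ℓ (i + j) + 1 := by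
        simp only [hldef, hb, List.length_cons]
      have e2 := ihj i hmi (by omega)
      rw [show i + (j + 1) = i + j + 1 by omega]
      omega
  -- values of the labels
  set G : ℕ → Fin 3 := fun i => if h : i < n then F ⟨i, h⟩ else 0 with hGdef
  have hGval : ∀ i (hi : i < n),
      G i = if ℓ i < ℓ (i + 1) then w (ℓ (i + 1)) else w (ℓ i) := by
    intro i hi
    have h1 : p (⟨i, hi⟩ : Fin n).castSucc = P i := by
      rw [hPdef i (by omega)]; congr 1
    have h2 : p (⟨i, hi⟩ : Fin n).succ = P (i + 1) := by
      rw [hPdef (i + 1) (by omega)]; congr 1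
    simp only [hGdef, dif_pos hi, hFdef, h1, h2, hldef]
  have hGA : ∀ i, i < m → G i = w (ℓ i) := by
    intro i him
    obtain ⟨b, hb⟩ := hup i him
    have e1 : ℓ i = ℓ (i + 1) + 1 := by
      simp only [hldef, hb, List.length_cons]
    rw [hGval i (hltn i him), if_neg (by omega)]
  have hGB : ∀ i, m ≤ i → i < n → G i = w (ℓ (i + 1)) := by
    intro i hmi hin
    obtain ⟨b, hb⟩ := hdown i hmi hin
    have e1 : ℓ (i + 1) = ℓ i + 1 := by
      simp only [hldef, hb, List.length_cons]
    rw [hGval i hin, if_pos (by omega)]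
  -- periodicity of the labels
  have hGper : ∀ i, i < 3 * k → G (s + i) = G (s + i + k) := by
    intro i hi
    have h1 : s + i < n := by omega
    have h2 : s + i + k < n := by omega
    have e := periodic_extract (List.ofFn F) x y z hl' i (by omega)
      (by rw [List.length_ofFn]; omega) (by rw [List.length_ofFn]; omega)
    rw [List.getElem_ofFn, List.getElem_ofFn] at e
    calc G (s + i) = F ⟨s + i, h1⟩ := by simp only [hGdef]; rw [dif_pos h1]
      _ = F ⟨s + i + k, h2⟩ := e
      _ = G (s + i + k) := by simp only [hGdef]; rw [dif_pos h2]
  -- final contradiction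
  by_cases hcase : s + 2 * k ≤ m
  · -- the square lies in the ascending part of the path (towards the root)
    obtain ⟨j, hj, hne⟩ := sqfree (ℓ (s + 2 * k - 1)) k hk1
    apply hne
    have e1 := lA j (s + 2 * k - 1 - j) (by omega)
    rw [show s + 2 * k - 1 - j + j = s + 2 * k - 1 by omega] at e1
    have e2 := lA (j + k) (s + k - 1 - j) (by omega)
    rw [show s + k - 1 - j + (j + k) = s + 2 * k - 1 by omega] at e2
    have g1 : G (s + 2 * k - 1 - j) = w (ℓ (s + 2 * k - 1) + j) := by
      rw [hGA _ (by omega), e1]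
    have g2 : G (s + k - 1 - j) = w (ℓ (s + 2 * k - 1) + (j + k)) := by
      rw [hGA _ (by omega), e2]
    have hp := hGper (k - 1 - j) (by omega)
    rw [show s + (k - 1 - j) = s + k - 1 - j by omega,
        show s + k - 1 - j + k = s + 2 * k - 1 - j by omega] at hp
    calc w (ℓ (s + 2 * k - 1) + j) = G (s + 2 * k - 1 - j) := g1.symm
      _ = G (s + k - 1 - j) := hp.symm
      _ = w (ℓ (s + 2 * k - 1) + (j + k)) := g2
      _ = w (ℓ (s + 2 * k - 1) + j + k) := by rw [show ℓ (s + 2 * k - 1) + (j + k) = ℓ (s + 2 * k - 1) + j + k by omega]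
  · -- the square lies in the descending part of the path (away from the root)
    obtain ⟨j, hj, hne⟩ := sqfree (ℓ (s + 2 * k + 1)) k hk1
    apply hne
    have e1 := lB j (s + 2 * k + 1) (by omega) (by omega)
    have e2 := lB (k + j) (s + 2 * k + 1) (by omega) (by omega)
    have g1 : G (s + 2 * k + j) = w (ℓ (s + 2 * k + 1) + j) := by
      rw [hGB _ (by omega) (by omega), show s + 2 * k + j + 1 = s + 2 * k + 1 + j by omega, e1]
    have g2 : G (s + 3 * k + j) = w (ℓ (s + 2 * k + 1) + (k + j)) := by
      rw [hGB _ (by omega) (by omega), show s + 3 * k + j + 1 = s + 2 * k + 1 + (k + j) by omega, e2]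
    have hp := hGper (2 * k + j) (by omega)
    rw [show s + (2 * k + j) = s + 2 * k + j by omega,
        show s + 2 * k + j + k = s + 3 * k + j by omega] at hp
    calc w (ℓ (s + 2 * k + 1) + j) = G (s + 2 * k + j) := g1.symm
      _ = G (s + 3 * k + j) := hp
      _ = w (ℓ (s + 2 * k + 1) + (k + j)) := g2
      _ = w (ℓ (s + 2 * k + 1) + j + k) := by rw [show ℓ (s + 2 * k + 1) + (k + j) = ℓ (s + 2 * k + 1) + j + k by omega]
end

section
/- The group Z^n (n ≥ 1) with its standard generating set is not a TS group: for every element ξ ∈ Z^n there exists a finite ξ-related set S with L(S) ≤ 2|S|, where L(S) is the length of the shortest closed path in the Cayley graph visiting every element of S. -/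
/-- A single step in the Cayley graph of `G` with respect to the generating set `X`
(steps may use generators or their inverses). -/
def Step {G : Type*} [Group G] (X : Set G) (g h : G) : Prop :=
  ∃ s ∈ X, h = g * s ∨ h = g * s⁻¹

/-- `β` is a walk of length `n` in the Cayley graph. -/
def IsWalk {G : Type*} [Group G] (X : Set G) (β : ℕ → G) (n : ℕ) : Prop :=
  ∀ i < n, Step X (β i) (β (i + 1))

/-- `β` is a closed walk of length `n` in the Cayley graph. -/
def IsClosedWalk {G : Type*} [Group G] (X : Set G) (β : ℕ → G) (n : ℕ) : Prop :=
  IsWalk X β n ∧ β 0 = β n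

/-- The walk `β` (of length `n`) passes through every element of `S`. -/
def Visits {G : Type*} (β : ℕ → G) (n : ℕ) (S : Finset G) : Prop :=
  ∀ s ∈ S, ∃ i ≤ n, β i = s

/-- `S` is `ξ`-related: every `x ∈ S` has a `ξ`-neighbour `y ∈ S`. -/
def Related {G : Type*} [Group G] (ξ : G) (S : Finset G) : Prop :=
  ∀ x ∈ S, ∃ y ∈ S, y⁻¹ * x = ξ ∨ y⁻¹ * x = ξ⁻¹

/-- Word length of `g` with respect to the generating set `X`. -/
noncomputable def wordLength {G : Type*} [Group G] (X : Set G) (g : G) : ℕ :=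
  sInf {n | ∃ β : ℕ → G, β 0 = 1 ∧ β n = g ∧ IsWalk X β n}


/-!
A "ladder" of two parallel rows `{s ^ j}` and `{s ^ j * ξ}` (`j < k`) along a generator `s` is
`ξ`-related. Walking up one row, across along a word for `ξ` of length `k`, down the other row and
back along the inverse word visits all of it in `4k - 2` steps, while the ladder has `2k` points
once its rows are disjoint. In `ℤⁿ` take `s` a unit vector and for the word a lattice path of
length `k = ‖ξ‖₁`: the rows are disjoint because `ξ = (a - b) • s` would force `‖ξ‖₁ = |a - b| < k`.
-/

open Multiplicative

section Ladder

variable {G : Type*}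

def HasShortRelatedTour [Group G] (X : Set G) (ξ : G) : Prop :=
  ∃ S : Finset G, S.Nonempty ∧ Related ξ S ∧
    ∃ (β : ℕ → G) (m : ℕ), IsClosedWalk X β m ∧ Visits β m S ∧ m ≤ 2 * S.card

theorem hasShortRelatedTour_one [Group G] (X : Set G) : HasShortRelatedTour X (1 : G) :=
  ⟨{1}, Finset.singleton_nonempty 1,
    fun x hx => ⟨x, hx, Or.inl (inv_mul_cancel x)⟩,
    fun _ => 1, 0, ⟨fun _ h => absurd h (Nat.not_lt_zero _), rfl⟩,
    fun _ hs => ⟨0, le_rfl, (Finset.mem_singleton.mp hs).symm⟩, Nat.zero_le _⟩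

theorem isWalk_prod_take [Group G] {X : Set G} {W : List G}
    (hW : ∀ x ∈ W, x ∈ X ∨ x⁻¹ ∈ X) : IsWalk X (fun t => (W.take t).prod) W.length := by
  intro t ht
  dsimp only
  rw [List.prod_take_succ W t ht]
  rcases hW _ (W.getElem_mem ht) with h | h
  · exact ⟨_, h, Or.inl rfl⟩
  · exact ⟨_, h, Or.inr (by rw [inv_inv])⟩

theorem isClosedWalk_prod_take [Group G] {X : Set G} {W : List G}
    (hW : ∀ x ∈ W, x ∈ X ∨ x⁻¹ ∈ X) (hprod : W.prod = 1) :
    IsClosedWalk X (fun t => (W.take t).prod) W.length :=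
  ⟨isWalk_prod_take hW, by simp [hprod]⟩

def ladder [Monoid G] [DecidableEq G] (s ξ : G) (k : ℕ) : Finset G :=
  (Finset.range k).image (s ^ ·) ∪ (Finset.range k).image (s ^ · * ξ)

def ladderTour [Group G] (s : G) (L : List G) : List G :=
  List.replicate (L.length - 1) s ++
    (L ++ (List.replicate (L.length - 1) s⁻¹ ++ L.map (·⁻¹)))

variable [CommGroup G]

theorem prod_ladderTour (s : G) (L : List G) : (ladderTour s L).prod = 1 := by
  simp [ladderTour, ← List.prod_inv]

variable [DecidableEq G]

theorem related_ladder (s ξ : G) (k : ℕ) : Related ξ (ladder s ξ k) := by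
  intro x hx
  simp only [ladder, Finset.mem_union, Finset.mem_image, Finset.mem_range] at hx ⊢
  rcases hx with ⟨j, hj, rfl⟩ | ⟨j, hj, rfl⟩
  · exact ⟨s ^ j * ξ, Or.inr ⟨j, hj, rfl⟩, Or.inr (by simp)⟩
  · exact ⟨s ^ j, Or.inl ⟨j, hj, rfl⟩, Or.inl (by simp)⟩

theorem card_ladder {s ξ : G} {k : ℕ} (hs : Function.Injective (s ^ · : ℕ → G))
    (hdisj : ∀ a < k, ∀ b < k, s ^ a ≠ s ^ b * ξ) : (ladder s ξ k).card = 2 * k := by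
  rw [ladder, Finset.card_union_of_disjoint, Finset.card_image_of_injective _ hs,
    Finset.card_image_of_injective (f := (s ^ · * ξ)) _ ((mul_left_injective ξ).comp hs),
    Finset.card_range, two_mul]
  simp only [Finset.disjoint_left, Finset.mem_image, Finset.mem_range]
  rintro _ ⟨a, ha, rfl⟩ ⟨b, hb, hab⟩
  exact hdisj a ha b hb hab.symm

theorem visits_ladderTour (s : G) (L : List G) :
    Visits (fun t => ((ladderTour s L).take t).prod) (ladderTour s L).length
      (ladder s L.prod L.length) := by
  intro x hx
  simp only [ladder, Finset.mem_union, Finset.mem_image, Finset.mem_range] at hx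
  rcases hx with ⟨j, hj, rfl⟩ | ⟨j, hj, rfl⟩
  · refine ⟨j, by simp [ladderTour]; omega, ?_⟩
    dsimp only
    rw [ladderTour, List.take_append_of_le_length (by simp; omega), List.take_replicate,
      List.prod_replicate, Nat.min_eq_left (by omega)]
  · have htime : (L.length - 1) + (L.length + (L.length - 1 - j)) =
        (List.replicate (L.length - 1) s).length + (L.length + (L.length - 1 - j)) := by simp
    refine ⟨(L.length - 1) + (L.length + (L.length - 1 - j)), by simp [ladderTour]; omega, ?_⟩
    have hsplit : s ^ (L.length - 1) = s ^ j * s ^ (L.length - 1 - j) := by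
      rw [← pow_add]; congr 1; omega
    dsimp only
    rw [ladderTour, htime, List.take_length_add_append, List.take_length_add_append,
      List.take_append_of_le_length (by simp), List.take_replicate]
    simp [hsplit, mul_comm, mul_assoc, mul_left_comm]

theorem hasShortRelatedTour_of_ladder {X : Set G} {s : G} {L : List G} (hsX : s ∈ X)
    (hL : ∀ x ∈ L, x ∈ X ∨ x⁻¹ ∈ X) (hk : 0 < L.length)
    (hs : Function.Injective (s ^ · : ℕ → G))
    (hdisj : ∀ a < L.length, ∀ b < L.length, s ^ a ≠ s ^ b * L.prod) :
    HasShortRelatedTour X L.prod := by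
  have hW : ∀ x ∈ ladderTour s L, x ∈ X ∨ x⁻¹ ∈ X := by
    intro x hx
    simp only [ladderTour, List.mem_append, List.mem_replicate, List.mem_map] at hx
    rcases hx with ⟨-, rfl⟩ | hx | ⟨-, rfl⟩ | ⟨y, hy, rfl⟩
    · exact Or.inl hsX
    · exact hL x hx
    · exact Or.inr (by rwa [inv_inv])
    · simpa [or_comm] using hL y hy
  refine ⟨ladder s L.prod L.length, ⟨1, ?_⟩, related_ladder _ _ _, _, _,
    isClosedWalk_prod_take hW (prod_ladderTour s L), visits_ladderTour s L, ?_⟩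
  · simp only [ladder, Finset.mem_union, Finset.mem_image, Finset.mem_range]
    exact Or.inl ⟨0, hk, pow_zero s⟩
  · rw [card_ladder hs hdisj]
    simp [ladderTour]
    omega

end Ladder

section IntLattice

variable {n : ℕ}

def unitVectors (n : ℕ) : Set (Multiplicative (Fin n → ℤ)) :=
  {g | ∃ i : Fin n, g = Multiplicative.ofAdd (Pi.single i 1)}

def unitWord (w : Fin n → ℤ) : List (Multiplicative (Fin n → ℤ)) :=
  (List.finRange n).flatMap fun i => List.replicate (w i).natAbs (ofAdd (Pi.single i (w i).sign))

theorem prod_unitWord (w : Fin n → ℤ) : (unitWord w).prod = ofAdd w := by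
  have hrow : ∀ i, (List.replicate (w i).natAbs (ofAdd (Pi.single i (w i).sign))).prod =
      ofAdd (Pi.single i (w i) : Fin n → ℤ) := by
    intro i
    rw [List.prod_replicate, ← ofAdd_nsmul, ← Pi.single_smul, nsmul_eq_mul, mul_comm,
      Int.sign_mul_natAbs]
  rw [unitWord, List.flatMap, List.prod_flatten, List.map_map, Function.comp_def]
  simp only [hrow]
  rw [← Fin.prod_univ_def, ← ofAdd_sum, Finset.univ_sum_single]

theorem length_unitWord (w : Fin n → ℤ) : (unitWord w).length = ∑ i, (w i).natAbs := by
  simp [unitWord, List.length_flatMap, Fin.sum_univ_def]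

theorem mem_unitWord {w : Fin n → ℤ} {x : Multiplicative (Fin n → ℤ)} (hx : x ∈ unitWord w) :
    x ∈ unitVectors n ∨ x⁻¹ ∈ unitVectors n := by
  simp only [unitWord, List.mem_flatMap, List.mem_finRange, true_and, List.mem_replicate] at hx
  obtain ⟨i, hi, rfl⟩ := hx
  rcases (Int.natAbs_ne_zero.mp hi).lt_or_gt with h | h
  · refine Or.inr ⟨i, ?_⟩
    rw [Int.sign_eq_neg_one_of_neg h, ← ofAdd_neg, Pi.single_neg, neg_neg]
  · exact Or.inl ⟨i, by rw [Int.sign_eq_one_of_pos h]⟩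

theorem sum_natAbs_single (i : Fin n) (c : ℤ) :
    ∑ j, ((Pi.single i c : Fin n → ℤ) j).natAbs = c.natAbs := by
  rw [Finset.sum_eq_single i (fun j _ hj => by simp [hj]) (by simp), Pi.single_eq_same]

theorem ofAdd_single_pow_ne_pow_mul {w : Fin n → ℤ} (i : Fin n) {a b : ℕ}
    (ha : a < ∑ j, (w j).natAbs) (hb : b < ∑ j, (w j).natAbs) :
    ofAdd (Pi.single i 1 : Fin n → ℤ) ^ a ≠ ofAdd (Pi.single i 1) ^ b * ofAdd w := by
  intro hab
  rw [← ofAdd_nsmul, ← ofAdd_nsmul, ← ofAdd_add, ofAdd.injective.eq_iff] at hab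
  have hw : w = Pi.single i ((a : ℤ) - b) := by
    ext j
    have := congrFun hab j
    by_cases hj : j = i <;> simp [hj] at this ⊢ <;> omega
  have := sum_natAbs_single i ((a : ℤ) - b)
  rw [← hw] at this
  omega

theorem hasShortRelatedTour_ofAdd {w : Fin n → ℤ} (hw : w ≠ 0) :
    HasShortRelatedTour (unitVectors n) (ofAdd w) := by
  obtain ⟨i, hi⟩ : ∃ i, w i ≠ 0 := Function.ne_iff.mp hw
  have hk : 0 < (unitWord w).length := by
    rw [length_unitWord]
    exact (Int.natAbs_pos.mpr hi).trans_le
      (Finset.single_le_sum (fun j _ => Nat.zero_le (w j).natAbs) (Finset.mem_univ i))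
  have hinj : Function.Injective (ofAdd (Pi.single i 1 : Fin n → ℤ) ^ · : ℕ → _) :=
    fun a b hab => by
      simpa using congrArg (fun g : Multiplicative (Fin n → ℤ) => toAdd g i) hab
  rw [← prod_unitWord w]
  refine hasShortRelatedTour_of_ladder ⟨i, rfl⟩ (fun x hx => mem_unitWord hx) hk hinj ?_
  simpa only [length_unitWord, prod_unitWord] using
    fun a ha b hb => ofAdd_single_pow_ne_pow_mul i ha hb

end IntLattice

theorem stmt_6_general (n : ℕ) (ξ : Multiplicative (Fin n → ℤ)) :
    ∃ S : Finset (Multiplicative (Fin n → ℤ)), S.Nonempty ∧ Related ξ S ∧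
      ∃ (β : ℕ → Multiplicative (Fin n → ℤ)) (m : ℕ),
        IsClosedWalk {g | ∃ i : Fin n, g = Multiplicative.ofAdd (Pi.single i 1)} β m ∧
        Visits β m S ∧ m ≤ 2 * S.card := by
  rcases eq_or_ne ξ 1 with rfl | hξ
  · exact hasShortRelatedTour_one _
  · exact hasShortRelatedTour_ofAdd (w := toAdd ξ) hξ

/-- `ℤⁿ` (`n ≥ 1`, written multiplicatively) with its standard generating set is
not a TS group: for every `ξ` there is a nonempty finite `ξ`-related set `S`
admitting a closed walk through all of `S` of length at most `2|S|`. -/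
theorem stmt_6 (n : ℕ) (hn : 1 ≤ n) (ξ : Multiplicative (Fin n → ℤ)) :
    ∃ S : Finset (Multiplicative (Fin n → ℤ)), S.Nonempty ∧ Related ξ S ∧
      ∃ (β : ℕ → Multiplicative (Fin n → ℤ)) (m : ℕ),
        IsClosedWalk {g | ∃ i : Fin n, g = Multiplicative.ofAdd (Pi.single i 1)} β m ∧
        Visits β m S ∧ m ≤ 2 * S.card :=
  stmt_6_general n ξ
end

section
/- Let Γ be a finitely generated group containing a central element z of infinite order. Then Γ is not a TS group: there exists λ > 1 (e.g. λ = 3) such that for every ξ ∈ Γ there exists a finite ξ-related set S with L(S) < λ|S|. -/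
section helpers
variable {G : Type*} [Group G] {X : Set G}

lemma step_symm {g h : G} (h1 : Step X g h) : Step X h g := by
  obtain ⟨s, hs, h2 | h2⟩ := h1
  · exact ⟨s, hs, Or.inr (by rw [h2]; group)⟩
  · exact ⟨s, hs, Or.inl (by rw [h2]; group)⟩

lemma step_mul (u : G) {g h : G} (h1 : Step X g h) : Step X (u*g) (u*h) := by
  obtain ⟨s, hs, h2 | h2⟩ := h1
  · exact ⟨s, hs, Or.inl (by rw [h2, mul_assoc])⟩
  · exact ⟨s, hs, Or.inr (by rw [h2, mul_assoc])⟩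

lemma exists_walk (hX : Subgroup.closure X = ⊤) (g : G) :
    ∃ n, ∃ β : ℕ → G, β 0 = 1 ∧ β n = g ∧ IsWalk X β n := by
  have hg : g ∈ Subgroup.closure X := hX ▸ Subgroup.mem_top g
  induction hg using Subgroup.closure_induction with
  | mem x hx =>
      refine ⟨1, fun i => if i = 0 then 1 else x, by simp, by simp, ?_⟩
      intro i hi
      interval_cases i
      exact ⟨x, hx, Or.inl (by simp)⟩
  | one => exact ⟨0, fun _ => 1, rfl, rfl, fun i hi => absurd hi (by simp)⟩
  | mul a b _ _ ha hb =>
      obtain ⟨p, β, hβ0, hβp, hβw⟩ := ha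
      obtain ⟨q, γ, hγ0, hγq, hγw⟩ := hb
      refine ⟨p + q, fun i => if i ≤ p then β i else a * γ (i - p), by simp [hβ0], ?_, ?_⟩
      · by_cases hq : q = 0
        · simp [hq, hβp, ← hγq, hq, hγ0]
        · have : ¬ (p + q ≤ p) := by omega
          simp [this, hγq]
      · intro i hi
        by_cases hip : i < p
        · have h1 : i ≤ p := le_of_lt hip
          have h2 : i + 1 ≤ p := hip
          simp only [h1, h2, if_pos]
          exact hβw i hip
        · have h1 : ¬ (i + 1 ≤ p) := by omega
          have key : (if i ≤ p then β i else a * γ (i - p)) = a * γ (i - p) := by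
            by_cases hip2 : i ≤ p
            · have : i = p := by omega
              simp [this, hβp, hγ0]
            · simp [hip2]
          beta_reduce
          rw [key, if_neg h1]
          have : i + 1 - p = (i - p) + 1 := by omega
          rw [this]
          exact step_mul a (hγw (i - p) (by omega))
  | inv a _ ha =>
      obtain ⟨n, β, hβ0, hβn, hβw⟩ := ha
      refine ⟨n, fun i => a⁻¹ * β (n - i), by simp [hβn], by simp [hβ0], ?_⟩
      intro i hi
      have h1 : n - i = (n - (i+1)) + 1 := by omega
      refine step_mul a⁻¹ (step_symm ?_)
      rw [h1]
      exact hβw (n - (i+1)) (by omega)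

lemma wordLength_spec (hX : Subgroup.closure X = ⊤) (g : G) :
    ∃ β : ℕ → G, β 0 = 1 ∧ β (wordLength X g) = g ∧ IsWalk X β (wordLength X g) := by
  have hne : {n | ∃ β : ℕ → G, β 0 = 1 ∧ β n = g ∧ IsWalk X β n}.Nonempty := by
    obtain ⟨n, β, h⟩ := exists_walk hX g
    exact ⟨n, β, h⟩
  exact Nat.sInf_mem hne

lemma walk_chain (p : ℕ → G) (c : ℕ → ℕ) (T : ℕ)
    (hstep : ∀ t < T, ∃ β : ℕ → G, β 0 = p t ∧ β (c t) = p (t+1) ∧ IsWalk X β (c t)) :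
    ∃ β : ℕ → G, β 0 = p 0 ∧ β (∑ t ∈ Finset.range T, c t) = p T ∧
      IsWalk X β (∑ t ∈ Finset.range T, c t) ∧
      ∀ t ≤ T, ∃ i ≤ ∑ t ∈ Finset.range T, c t, β i = p t := by
  induction T with
  | zero =>
      exact ⟨fun _ => p 0, rfl, by simp, fun i hi => absurd hi (by simp),
        fun t ht => ⟨0, by simp, by rw [Nat.le_zero.mp ht]⟩⟩
  | succ T ih =>
      obtain ⟨β, hβ0, hβn, hβw, hβv⟩ := ih (fun t ht => hstep t (by omega))
      obtain ⟨γ, hγ0, hγm, hγw⟩ := hstep T (by omega)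
      set n := ∑ t ∈ Finset.range T, c t with hn
      have hsum : ∑ t ∈ Finset.range (T+1), c t = n + c T := Finset.sum_range_succ c T
      set δ : ℕ → G := fun i => if i ≤ n then β i else γ (i - n) with hδ
      have key : ∀ j, n ≤ j → δ j = γ (j - n) := by
        intro j hj
        by_cases hj' : j ≤ n
        · have : j = n := le_antisymm hj' hj
          simp [hδ, this, hβn, ← hγ0]
        · simp [hδ, hj']
      refine ⟨δ, by simp [hδ, hβ0], ?_, ?_, ?_⟩
      · rw [hsum, key _ (by omega)]
        simpa using hγm
      · rw [hsum]
        intro i hi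
        by_cases hip : i < n
        · have h1 : i ≤ n := le_of_lt hip
          have h2 : i + 1 ≤ n := hip
          simp only [hδ, h1, h2, if_pos]
          exact hβw i hip
        · rw [key i (by omega), key (i+1) (by omega)]
          have : i + 1 - n = (i - n) + 1 := by omega
          rw [this]
          exact hγw (i - n) (by omega)
      · intro t ht
        rcases Nat.lt_or_ge t (T+1) with ht' | ht'
        · obtain ⟨i, hi, hit⟩ := hβv t (by omega)
          exact ⟨i, by omega, by simp [hδ, hi, hit]⟩
        · have : t = T + 1 := by omega
          refine ⟨n + c T, by omega, ?_⟩
          rw [key _ (by omega), this]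
          simpa using hγm

end helpers

lemma sum_Ico_const (f : ℕ → ℕ) (a b v : ℕ) (h : ∀ t, a ≤ t → t < b → f t = v) :
    ∑ t ∈ Finset.Ico a b, f t = (b - a) * v := by
  rw [Finset.sum_congr rfl (fun t ht => h t (Finset.mem_Ico.mp ht).1 (Finset.mem_Ico.mp ht).2),
    Finset.sum_const, Nat.card_Ico, smul_eq_mul]

lemma key_ineq_A (a b m dd dd' : ℕ) (h : dd + dd' = m) :
    m * a + dd + m * b + dd' < (a + b + 2) * (2 * m + 2) := by nlinarith

lemma key_ineq_B (a b n : ℕ) : n * a + n * b < (a + b + 2) * (n + 1) := by nlinarith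

/-- A finitely generated group with a central element of infinite order is not TS:
there is a `λ > 1` (indeed `λ = 3`) such that for every `ξ` there is a nonempty
finite `ξ`-related set `S` admitting a closed walk through all of `S` of length
`< λ|S|`. -/
theorem stmt_7 {G : Type*} [Group G] (X : Finset G)
    (hX : Subgroup.closure (X : Set G) = ⊤)
    (z : G) (hcentral : ∀ g : G, g * z = z * g)
    (hord : ∀ m : ℕ, 0 < m → z ^ m ≠ 1) :
    ∃ lam : ℝ, 1 < lam ∧ ∀ ξ : G, ∃ S : Finset G, S.Nonempty ∧ Related ξ S ∧
      ∃ (β : ℕ → G) (m : ℕ), IsClosedWalk (X : Set G) β m ∧ Visits β m S ∧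
        (m : ℝ) < lam * S.card := by
  classical
  obtain ⟨βz, hβz0, hβz1, hβzw⟩ := wordLength_spec hX z
  obtain ⟨βz', hβz'0, hβz'1, hβz'w⟩ := wordLength_spec hX z⁻¹
  set cz := wordLength (X : Set G) z with hcz
  set cz' := wordLength (X : Set G) z⁻¹ with hcz'
  have hinj : ∀ a b : ℕ, z ^ a = z ^ b → a = b := by
    intro a b hab
    by_contra hne
    rcases Nat.lt_or_ge a b with h | h
    · apply hord (b - a) (by omega)
      have hba : z ^ b = z ^ a * z ^ (b - a) := by rw [← pow_add]; congr 1; omega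
      exact (mul_left_cancel (a := z ^ a)
        (show z ^ a * z ^ (b - a) = z ^ a * 1 by rw [mul_one, ← hba]; exact hab.symm)).symm ▸ rfl
    · apply hord (a - b) (by omega)
      have hba : z ^ a = z ^ b * z ^ (a - b) := by rw [← pow_add]; congr 1; omega
      exact (mul_left_cancel (a := z ^ b)
        (show z ^ b * z ^ (a - b) = z ^ b * 1 by rw [mul_one, ← hba]; exact hab)).symm ▸ rfl
  refine ⟨((cz + cz' + 2 : ℕ) : ℝ), by exact_mod_cast (by omega : 1 < cz + cz' + 2), ?_⟩
  intro ξ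
  by_cases hA : ∃ k : ℤ, ξ = z ^ k
  · obtain ⟨k, hk⟩ := hA
    by_cases hk0 : k = 0
    · -- trivial case ξ = 1
      refine ⟨{1}, ⟨1, Finset.mem_singleton_self 1⟩, ?_, fun _ => 1, 0,
        ⟨fun i hi => absurd hi (by omega), rfl⟩, ?_, ?_⟩
      · intro x hx
        rw [Finset.mem_singleton] at hx
        subst hx
        exact ⟨1, Finset.mem_singleton_self 1, Or.inl (by simp [hk, hk0])⟩
      · intro s hs
        rw [Finset.mem_singleton] at hs
        exact ⟨0, le_refl 0, hs.symm⟩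
      · simp only [Finset.card_singleton, Nat.cast_one, mul_one, Nat.cast_zero]
        exact_mod_cast (by positivity : (0:ℝ) < ((cz + cz' + 2 : ℕ) : ℝ))
    · -- ξ is a nonzero power of z
      set K := k.natAbs with hK
      have hK1 : 1 ≤ K := by omega
      have hzK : z ^ K = ξ ∨ z ^ K = ξ⁻¹ := by
        rcases Int.natAbs_eq k with h | h
        · left; rw [hk, h, zpow_natCast]
        · right; rw [hk, h, zpow_neg, inv_inv, zpow_natCast]
      set N := 2 * K with hN
      set p : ℕ → G := fun t => z ^ (if t ≤ N then t else 2 * N - t) with hp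
      set c : ℕ → ℕ := fun t => if t < N then cz else cz' with hc
      have hp0 : ∀ t ≤ N, p t = z ^ t := by
        intro t ht
        rw [hp]
        simp only [if_pos ht]
      have hpt : ∀ t, N ≤ t → p t = z ^ (2 * N - t) := by
        intro t ht
        by_cases h : t ≤ N
        · have hteq : t = N := by omega
          rw [hp0 t h, hteq]
          congr 1
          omega
        · rw [hp]
          simp only [if_neg h]
      have hstep : ∀ t < 2 * N, ∃ β : ℕ → G, β 0 = p t ∧ β (c t) = p (t+1) ∧
          IsWalk (X : Set G) β (c t) := by
        intro t ht
        by_cases htN : t < N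
        · have hct : c t = cz := if_pos htN
          refine ⟨fun i => z ^ t * βz i, ?_, ?_,
            fun i hi => step_mul _ (hβzw i (by rwa [hct] at hi))⟩
          · show z ^ t * βz 0 = p t
            rw [hβz0, mul_one, hp0 t htN.le]
          · show z ^ t * βz (c t) = p (t+1)
            rw [hct, hβz1, hp0 (t+1) (by omega), pow_succ]
        · have hct : c t = cz' := if_neg htN
          refine ⟨fun i => z ^ (2 * N - t) * βz' i, ?_, ?_,
            fun i hi => step_mul _ (hβz'w i (by rwa [hct] at hi))⟩
          · show z ^ (2 * N - t) * βz' 0 = p t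
            rw [hβz'0, mul_one, hpt t (by omega)]
          · show z ^ (2 * N - t) * βz' (c t) = p (t+1)
            rw [hct, hβz'1, hpt (t+1) (by omega)]
            have h1 : z ^ (2 * N - t) = z ^ (2 * N - (t+1)) * z := by
              rw [← pow_succ]; congr 1; omega
            rw [h1, mul_assoc, mul_inv_cancel, mul_one]
      obtain ⟨β, hβ0, hβT, hβw, hβv⟩ := walk_chain p c (2 * N) hstep
      have hsum : ∑ t ∈ Finset.range (2 * N), c t = N * cz + N * cz' := by
        rw [← Finset.sum_range_add_sum_Ico c (show N ≤ 2 * N by omega),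
          Finset.range_eq_Ico]
        have h1 : ∑ t ∈ Finset.Ico 0 N, c t = N * cz := by
          rw [sum_Ico_const c 0 N cz (fun t _ h2 => if_pos h2)]
          congr 1
        have h2 : ∑ t ∈ Finset.Ico N (2 * N), c t = N * cz' := by
          rw [sum_Ico_const c N (2 * N) cz' (fun t h1 _ => if_neg (by omega))]
          congr 1
          omega
        rw [h1, h2]
      refine ⟨(Finset.range (N+1)).image (z ^ ·), ⟨z ^ 0,
        Finset.mem_image.mpr ⟨0, Finset.mem_range.mpr (by omega), rfl⟩⟩, ?_, β,
        ∑ t ∈ Finset.range (2 * N), c t, ⟨hβw, ?_⟩, ?_, ?_⟩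
      · -- Related
        intro x hx
        obtain ⟨i, hi, rfl⟩ := Finset.mem_image.mp hx
        rw [Finset.mem_range] at hi
        by_cases hiK : K ≤ i
        · refine ⟨z ^ (i - K), Finset.mem_image.mpr ⟨i - K,
            Finset.mem_range.mpr (by omega), rfl⟩, ?_⟩
          have heq : (z ^ (i - K))⁻¹ * z ^ i = z ^ K := by
            have h1 : z ^ i = z ^ (i - K) * z ^ K := by rw [← pow_add]; congr 1; omega
            rw [h1, inv_mul_cancel_left]
          rw [heq]
          exact hzK
        · refine ⟨z ^ (i + K), Finset.mem_image.mpr ⟨i + K,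
            Finset.mem_range.mpr (by omega), rfl⟩, ?_⟩
          have heq : (z ^ (i + K))⁻¹ * z ^ i = (z ^ K)⁻¹ := by
            rw [pow_add]; group
          rw [heq]
          rcases hzK with h | h
          · exact Or.inr (by rw [h])
          · exact Or.inl (by rw [h, inv_inv])
      · -- closed
        rw [hβ0, hβT, hp0 0 (by omega), hpt (2*N) (by omega), pow_zero,
          Nat.sub_self, pow_zero]
      · -- visits
        intro s hs
        obtain ⟨i, hi, rfl⟩ := Finset.mem_image.mp hs
        rw [Finset.mem_range] at hi
        obtain ⟨j, hj, hji⟩ := hβv i (by omega)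
        exact ⟨j, hj, by rw [hji, hp0 i (by omega)]⟩
      · -- length bound
        have hcard : ((Finset.range (N+1)).image (z ^ ·)).card = N + 1 := by
          rw [Finset.card_image_of_injOn (fun a _ b _ hab => hinj a b hab),
            Finset.card_range]
        rw [hcard, hsum]
        exact_mod_cast key_ineq_B cz cz' N
  · -- generic case: ξ is not a power of z
    push_neg at hA
    obtain ⟨βξ, hβξ0, hβξ1, hβξw⟩ := wordLength_spec hX ξ
    obtain ⟨βξ', hβξ'0, hβξ'1, hβξ'w⟩ := wordLength_spec hX ξ⁻¹
    set d := wordLength (X : Set G) ξ with hd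
    set d' := wordLength (X : Set G) ξ⁻¹ with hd'
    set M := d + d' with hM
    set p : ℕ → G := fun t => if t ≤ M then z ^ t
      else if t ≤ 2*M+1 then z ^ (2*M+1-t) * ξ else 1 with hp
    set c : ℕ → ℕ := fun t => if t < M then cz else if t = M then d
      else if t < 2*M+1 then cz' else d' with hc
    have hp1 : ∀ t ≤ M, p t = z ^ t := fun t ht => if_pos ht
    have hp2 : ∀ t, M < t → t ≤ 2*M+1 → p t = z ^ (2*M+1-t) * ξ := by
      intro t h1 h2
      rw [hp]
      simp only [if_neg (by omega : ¬ t ≤ M), if_pos h2]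
    have hp3 : p (2*M+2) = 1 := by
      rw [hp]
      simp only [if_neg (by omega : ¬ 2*M+2 ≤ M), if_neg (by omega : ¬ 2*M+2 ≤ 2*M+1)]
    have hc1 : ∀ t < M, c t = cz := fun t ht => if_pos ht
    have hc2 : c M = d := by rw [hc]; simp
    have hc3 : ∀ t, M < t → t < 2*M+1 → c t = cz' := by
      intro t h1 h2
      rw [hc]
      simp only [if_neg (by omega : ¬ t < M), if_neg (by omega : t ≠ M), if_pos h2]
    have hc4 : c (2*M+1) = d' := by
      rw [hc]
      simp only [if_neg (by omega : ¬ 2*M+1 < M), if_neg (by omega : 2*M+1 ≠ M),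
        if_neg (by omega : ¬ 2*M+1 < 2*M+1)]
    have hmix : ∀ (a b : ℕ), z ^ a ≠ z ^ b * ξ := by
      intro a b h
      refine hA ((a:ℤ) - b) ?_
      calc ξ = (z ^ b)⁻¹ * z ^ a := by rw [h]; group
        _ = z ^ (-(b:ℤ)) * z ^ (a:ℤ) := by rw [zpow_neg, zpow_natCast, zpow_natCast]
        _ = z ^ ((a:ℤ) - b) := by rw [← zpow_add]; congr 1; ring
    have hstep : ∀ t < 2*M+2, ∃ β : ℕ → G, β 0 = p t ∧ β (c t) = p (t+1) ∧
        IsWalk (X : Set G) β (c t) := by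
      intro t ht
      rcases (show t < M ∨ t = M ∨ (M < t ∧ t < 2*M+1) ∨ t = 2*M+1 by omega) with
        h | h | ⟨h1, h2⟩ | h
      · have hct : c t = cz := hc1 t h
        refine ⟨fun i => z ^ t * βz i, ?_, ?_,
          fun i hi => step_mul _ (hβzw i (by rwa [hct] at hi))⟩
        · show z ^ t * βz 0 = p t
          rw [hβz0, mul_one, hp1 t h.le]
        · show z ^ t * βz (c t) = p (t+1)
          rw [hct, hβz1, hp1 (t+1) (by omega), pow_succ]
      · have hct : c t = d := by rw [h, hc2]
        refine ⟨fun i => z ^ M * βξ i, ?_, ?_,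
          fun i hi => step_mul _ (hβξw i (by rwa [hct] at hi))⟩
        · show z ^ M * βξ 0 = p t
          rw [hβξ0, mul_one, hp1 t (by omega), h]
        · show z ^ M * βξ (c t) = p (t+1)
          rw [hct, hβξ1, hp2 (t+1) (by omega) (by omega),
            show 2*M+1-(t+1) = M by omega]
      · have hct : c t = cz' := hc3 t h1 h2
        refine ⟨fun i => (z ^ (2*M+1-t) * ξ) * βz' i, ?_, ?_,
          fun i hi => step_mul _ (hβz'w i (by rwa [hct] at hi))⟩
        · show (z ^ (2*M+1-t) * ξ) * βz' 0 = p t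
          rw [hβz'0, mul_one, hp2 t h1 (by omega)]
        · show (z ^ (2*M+1-t) * ξ) * βz' (c t) = p (t+1)
          rw [hct, hβz'1, hp2 (t+1) (by omega) (by omega)]
          have hza : z ^ (2*M+1-t) = z ^ (2*M+1-(t+1)) * z := by
            rw [← pow_succ]; congr 1; omega
          have hzc : z * ξ * z⁻¹ = ξ := by rw [← hcentral ξ]; group
          calc z ^ (2*M+1-t) * ξ * z⁻¹ = z ^ (2*M+1-(t+1)) * (z * ξ * z⁻¹) := by
                rw [hza]; group
            _ = z ^ (2*M+1-(t+1)) * ξ := by rw [hzc]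
      · have hct : c t = d' := by rw [h, hc4]
        refine ⟨fun i => ξ * βξ' i, ?_, ?_,
          fun i hi => step_mul _ (hβξ'w i (by rwa [hct] at hi))⟩
        · show ξ * βξ' 0 = p t
          rw [hβξ'0, mul_one, hp2 t (by omega) (by omega), h,
            show 2*M+1-(2*M+1) = 0 by omega, pow_zero, one_mul]
        · show ξ * βξ' (c t) = p (t+1)
          rw [hct, hβξ'1, h, hp3, mul_inv_cancel]
    obtain ⟨β, hβ0, hβT, hβw, hβv⟩ := walk_chain p c (2*M+2) hstep
    have hsum : ∑ t ∈ Finset.range (2*M+2), c t = M * cz + d + M * cz' + d' := by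
      rw [Finset.sum_range_succ, hc4,
        ← Finset.sum_range_add_sum_Ico c (show M ≤ 2*M+1 by omega),
        Finset.range_eq_Ico,
        sum_Ico_const c 0 M cz (fun t _ h2 => hc1 t h2),
        Finset.sum_eq_sum_Ico_succ_bot (by omega : M < 2*M+1) c, hc2,
        sum_Ico_const c (M+1) (2*M+1) cz' (fun t ha hb => hc3 t (by omega) hb),
        show M - 0 = M by omega, show 2*M+1-(M+1) = M by omega]
      ring
    have hpInj : Set.InjOn p (Finset.range (2*M+2)) := by
      intro s hs t ht hst
      simp only [Finset.coe_range, Set.mem_Iio] at hs ht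
      rcases le_or_gt s M with h1 | h1 <;> rcases le_or_gt t M with h2 | h2
      · rw [hp1 s h1, hp1 t h2] at hst; exact hinj s t hst
      · rw [hp1 s h1, hp2 t h2 (by omega)] at hst
        exact absurd hst (hmix _ _)
      · rw [hp2 s h1 (by omega), hp1 t h2] at hst
        exact absurd hst.symm (hmix _ _)
      · rw [hp2 s h1 (by omega), hp2 t h2 (by omega)] at hst
        have := hinj _ _ (mul_right_cancel hst)
        omega
    refine ⟨(Finset.range (2*M+2)).image p, ⟨p 0,
      Finset.mem_image.mpr ⟨0, Finset.mem_range.mpr (by omega), rfl⟩⟩, ?_, β,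
      ∑ t ∈ Finset.range (2*M+2), c t, ⟨hβw, ?_⟩, ?_, ?_⟩
    · -- Related
      intro x hx
      obtain ⟨t, ht, rfl⟩ := Finset.mem_image.mp hx
      rw [Finset.mem_range] at ht
      refine ⟨p (2*M+1-t), Finset.mem_image.mpr ⟨2*M+1-t,
        Finset.mem_range.mpr (by omega), rfl⟩, ?_⟩
      by_cases htM : t ≤ M
      · refine Or.inr ?_
        rw [hp1 t htM, hp2 (2*M+1-t) (by omega) (by omega),
          show 2*M+1-(2*M+1-t) = t by omega]
        group
      · refine Or.inl ?_
        rw [hp2 t (by omega) (by omega), hp1 (2*M+1-t) (by omega)]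
        group
    · -- closed
      rw [hβ0, hβT, hp1 0 (by omega), hp3, pow_zero]
    · -- visits
      intro s hs
      obtain ⟨t, ht, rfl⟩ := Finset.mem_image.mp hs
      rw [Finset.mem_range] at ht
      exact hβv t (by omega)
    · -- length bound
      have hcard : ((Finset.range (2*M+2)).image p).card = 2*M+2 := by
        rw [Finset.card_image_of_injOn hpInj, Finset.card_range]
      rw [hcard, hsum]
      exact_mod_cast key_ineq_A cz cz' M d d' rfl
end

section
/- A nontrivial finitely generated solvable group does not satisfy property (P'): there exists r > 0 such that for every ξ in the group there is an aperiodic sequence x_1, ..., x_k of nontrivial elements of length at most r with |ξ^{ε_1} x_1 ⋯ ξ^{ε_k} x_k| ≤ r for some signs ε_i. -/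
/-- The product `ξ^{ε₁} x₁ ξ^{ε₂} x₂ ⋯ ξ^{ε_k} x_k`, where the list `l` records the
pairs `(xᵢ, εᵢ)` (with `true` standing for `+1` and `false` for `-1`). -/
def sprod {G : Type*} [Group G] (ξ : G) (l : List (G × Bool)) : G :=
  (l.map fun p => (if p.2 then ξ else ξ⁻¹) * p.1).prod

/-!
Let `A` be the last nontrivial term of the derived series: an abelian normal subgroup, and
let `C` be its centralizer. For `a ∈ A` and `b ∈ C` the conjugate `ξ a ξ⁻¹` stays in `A`, so it
commutes with `b` and `ξ a ξ⁻¹ b ξ a⁻¹ ξ⁻¹ b⁻¹ = 1` for every `ξ`. When `G` is infinite, `C` is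
infinite (it has finite index as soon as `A` is finite), which leaves enough room to choose `a, b`
making `a, b, a⁻¹, b⁻¹` square-free. If `C` has exponent two, that word is a square, but then `C`
is abelian and the square-free word `a, c, b, d, ab, cd` collapses in the same way. A finite group
is handled by a single letter, its word length being bounded.
-/

open Subgroup

section Aperiodic

variable {α : Type*}

theorem kAperiodic_of_length_le {k : ℕ} {l : List α} (h : l.length ≤ k) : KAperiodic k l := by
  intro x y z hl
  apply_fun List.length at hl
  simp only [List.length_append, List.length_flatten, List.map_replicate, List.sum_replicate,
    smul_eq_mul] at hl
  rcases y with _ | ⟨b, y⟩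
  · rfl
  · simp only [List.length_cons] at hl
    nlinarith

theorem flatten_replicate_two (y : List α) : (List.replicate (1 + 1) y).flatten = y ++ y := by
  simp [List.replicate_succ]

theorem kAperiodic_one_four {a b c d : α} (hab : a ≠ b) (hbc : b ≠ c) (hcd : c ≠ d)
    (habcd : ¬(a = c ∧ b = d)) : KAperiodic 1 [a, b, c, d] := by
  intro x y z h
  rw [flatten_replicate_two] at h
  rcases y with _ | ⟨y1, _ | ⟨y2, _ | ⟨y3, ys⟩⟩⟩
  · rfl
  · rcases x with _ | ⟨x1, _ | ⟨x2, _ | ⟨x3, _ | ⟨x4, xs⟩⟩⟩⟩ <;> simp_all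
  · rcases x with _ | ⟨x1, xs⟩
    · simp_all
    · apply_fun List.length at h; simp at h; omega
  · apply_fun List.length at h; simp at h; omega

theorem kAperiodic_one_six {a b c d e f : α}
    (hab : a ≠ b) (hbc : b ≠ c) (hcd : c ≠ d) (hde : d ≠ e) (hef : e ≠ f)
    (habcd : ¬(a = c ∧ b = d)) (hbcde : ¬(b = d ∧ c = e)) (hcdef : ¬(c = e ∧ d = f))
    (habcdef : ¬(a = d ∧ b = e ∧ c = f)) : KAperiodic 1 [a, b, c, d, e, f] := by
  intro x y z h
  rw [flatten_replicate_two] at h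
  rcases y with _ | ⟨y1, _ | ⟨y2, _ | ⟨y3, _ | ⟨y4, ys⟩⟩⟩⟩
  · rfl
  · rcases x with _ | ⟨x1, _ | ⟨x2, _ | ⟨x3, _ | ⟨x4, _ | ⟨x5, _ | ⟨x6, xs⟩⟩⟩⟩⟩⟩ <;> simp_all
  · rcases x with _ | ⟨x1, _ | ⟨x2, _ | ⟨x3, xs⟩⟩⟩
    · simp_all
    · simp_all
    · simp_all
    · apply_fun List.length at h; simp at h; omega
  · rcases x with _ | ⟨x1, xs⟩
    · simp_all
    · apply_fun List.length at h; simp at h; omega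
  · apply_fun List.length at h; simp at h; omega

end Aperiodic

section Group

variable {G : Type*} [Group G]

theorem commute_of_mul_self_eq_one {x y : G} (hx : x * x = 1) (hy : y * y = 1)
    (hxy : x * y * (x * y) = 1) : Commute x y := by
  rw [mul_eq_one_iff_eq_inv] at hx hy hxy
  calc x * y = (x * y)⁻¹ := hxy
    _ = y * x := by rw [mul_inv_rev, ← hx, ← hy]

theorem IsSolvable.exists_normal_ne_bot_le_centralizer [Group.IsSolvable G] [Nontrivial G] :
    ∃ A : Subgroup G, A.Normal ∧ A ≠ ⊥ ∧ A ≤ centralizer (A : Set G) := by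
  classical
  have hex : ∃ n, derivedSeries G n = ⊥ := (Group.isSolvable_def G).mp inferInstance
  have hpos : 0 < Nat.find hex := by
    by_contra! h0
    have h := Nat.find_spec hex
    rw [Nat.le_zero.mp h0, derivedSeries_zero] at h
    exact top_ne_bot h
  refine ⟨derivedSeries G (Nat.find hex - 1), derivedSeries_normal _ _,
    Nat.find_min hex (by omega), ?_⟩
  rw [← commutator_eq_bot_iff_le_centralizer, ← derivedSeries_succ, Nat.sub_add_cancel hpos]
  exact Nat.find_spec hex

theorem Subgroup.finiteIndex_centralizer (A : Subgroup G) [A.Normal] [Finite A] :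
    (centralizer (A : Set G)).FiniteIndex := by
  have hker : (MulAut.conjNormal : G →* MulAut A).ker = centralizer (A : Set G) := by
    ext g
    simp only [MonoidHom.mem_ker, MulEquiv.ext_iff, Subtype.ext_iff, MulAut.conjNormal_apply,
      MulAut.one_apply, mem_centralizer_iff, SetLike.mem_coe, Subtype.forall]
    refine forall₂_congr fun x _ => ?_
    rw [mul_inv_eq_iff_eq_mul, eq_comm]
  rw [← hker]
  exact finiteIndex_ker _

theorem Subgroup.infinite_centralizer [Infinite G] (A : Subgroup G) [A.Normal]
    (hA : A ≤ centralizer (A : Set G)) : (centralizer (A : Set G) : Set G).Infinite := by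
  by_cases hfin : Finite A
  · intro hC
    have : Finite (centralizer (A : Set G)) := hC.to_subtype
    have : Finite G := (finite_iff_finite_and_finiteIndex _).mpr ⟨this, finiteIndex_centralizer A⟩
    exact not_finite G
  · exact (Set.infinite_coe_iff.mp (not_finite_iff_infinite.mp hfin)).mono hA

theorem wordLength_one (X : Set G) : wordLength X 1 = 0 :=
  Nat.sInf_eq_zero.mpr (Or.inl ⟨fun _ => 1, rfl, rfl, fun _ hi => absurd hi (Nat.not_lt_zero _)⟩)

theorem sprod_commutator_eq_one {ξ a b : G} (h : Commute (ξ * a * ξ⁻¹) b) :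
    sprod ξ [(a, true), (b, false), (a⁻¹, true), (b⁻¹, false)] = 1 := by
  simp only [sprod, List.map_cons, List.map_nil, List.prod_cons, List.prod_nil, if_true,
    Bool.false_eq_true, if_false, mul_one]
  calc ξ * a * (ξ⁻¹ * b * (ξ * a⁻¹ * (ξ⁻¹ * b⁻¹)))
      = ξ * a * ξ⁻¹ * b * (ξ * a * ξ⁻¹)⁻¹ * b⁻¹ := by group
    _ = b * (ξ * a * ξ⁻¹) * (ξ * a * ξ⁻¹)⁻¹ * b⁻¹ := by rw [h.eq]
    _ = 1 := by group

theorem sprod_six_eq_one {N : Subgroup G} [N.Normal] (hN : ∀ x ∈ N, ∀ y ∈ N, Commute x y)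
    (ξ : G) {a b c d e f : G} (ha : a ∈ N) (hb : b ∈ N) (hc : c ∈ N) (hd : d ∈ N) (he : e ∈ N)
    (hf : f ∈ N) (habe : a * b * e = 1) (hcdf : c * d * f = 1) :
    sprod ξ [(a, true), (c, false), (b, true), (d, false), (e, true), (f, false)] = 1 := by
  let _ : CommGroup N := { mul_comm := fun x y => Subtype.ext (hN x x.2 y y.2) }
  let φ : MulAut N := MulAut.conjNormal ξ
  have hodd : (⟨a, ha⟩ * ⟨b, hb⟩ * ⟨e, he⟩ : N) = 1 := Subtype.ext habe
  have heven : (⟨c, hc⟩ * ⟨d, hd⟩ * ⟨f, hf⟩ : N) = 1 := Subtype.ext hcdf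
  have hN1 : φ ⟨a, ha⟩ * ⟨c, hc⟩ * φ ⟨b, hb⟩ * ⟨d, hd⟩ * φ ⟨e, he⟩ * ⟨f, hf⟩ = 1 := by
    calc _ = φ (⟨a, ha⟩ * ⟨b, hb⟩ * ⟨e, he⟩) * (⟨c, hc⟩ * ⟨d, hd⟩ * ⟨f, hf⟩) := by
          simp only [map_mul]; ac_rfl
      _ = 1 := by rw [hodd, heven, map_one, one_mul]
  have hG1 := congrArg Subtype.val hN1
  simp only [φ, coe_mul, MulAut.conjNormal_apply, OneMemClass.coe_one] at hG1
  simp only [sprod, List.map_cons, List.map_nil, List.prod_cons, List.prod_nil, if_true,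
    Bool.false_eq_true, if_false, mul_one]
  rw [← hG1]
  group

end Group

def FailsPropertyP' {G : Type*} [Group G] (X : Set G) : Prop :=
  ∃ r : ℕ, 0 < r ∧ ∀ ξ : G, ∃ l : List (G × Bool), l ≠ [] ∧
    KAperiodic 1 (l.map Prod.fst) ∧
    (∀ p ∈ l, p.1 ≠ 1 ∧ wordLength X p.1 ≤ r) ∧
    wordLength X (sprod ξ l) ≤ r

section FailsPropertyP'

variable {G : Type*} [Group G] (X : Set G)

theorem failsPropertyP'_of_finite [Finite G] [Nontrivial G] : FailsPropertyP' X := by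
  classical
  cases nonempty_fintype G
  obtain ⟨g, hg⟩ := exists_ne (1 : G)
  have hle : ∀ x : G, wordLength X x ≤ Finset.univ.sup (wordLength X) :=
    fun x => Finset.le_sup (Finset.mem_univ x)
  refine ⟨Finset.univ.sup (wordLength X) + 1, by omega, fun ξ =>
    ⟨[(g, true)], by simp, kAperiodic_of_length_le (by simp), ?_, (hle _).trans (Nat.le_succ _)⟩⟩
  simpa using ⟨hg, (hle g).trans (Nat.le_succ _)⟩

theorem failsPropertyP'_of_forall_sprod_eq_one {l : List (G × Bool)} (hl : l ≠ [])
    (hap : KAperiodic 1 (l.map Prod.fst)) (hne : ∀ p ∈ l, p.1 ≠ 1)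
    (hprod : ∀ ξ, sprod ξ l = 1) : FailsPropertyP' X :=
  ⟨(l.map fun p => wordLength X p.1).sum + 1, by omega, fun ξ => ⟨l, hl, hap,
    fun p hp => ⟨hne p hp,
      (List.le_sum_of_mem (List.mem_map_of_mem (f := fun p => wordLength X p.1) hp)).trans
        (Nat.le_succ _)⟩,
    by rw [hprod, wordLength_one]; omega⟩⟩

theorem failsPropertyP'_of_mem_centralizer {A : Subgroup G} [A.Normal] (hA : A ≠ ⊥)
    (hC : (centralizer (A : Set G) : Set G).Infinite) {c : G}
    (hc : c ∈ centralizer (A : Set G)) (hc2 : c * c ≠ 1) : FailsPropertyP' X := by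
  classical
  obtain ⟨a, haA, ha⟩ := A.bot_or_exists_ne_one.resolve_left hA
  obtain ⟨b, hbC, hb, hba, hbai, hab2⟩ : ∃ b ∈ centralizer (A : Set G),
      b ≠ 1 ∧ b ≠ a ∧ b ≠ a⁻¹ ∧ (a * a ≠ 1 ∨ b * b ≠ 1) := by
    by_cases ha2 : a * a = 1
    · have hai : a⁻¹ = a := (eq_inv_of_mul_eq_one_left ha2).symm
      refine ⟨c, hc, ?_, ?_, ?_, Or.inr hc2⟩ <;> rintro rfl <;> simp_all
    · obtain ⟨b, hbC, hb⟩ := hC.exists_notMem_finset {1, a, a⁻¹}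
      simp only [Finset.mem_insert, Finset.mem_singleton, not_or] at hb
      exact ⟨b, hbC, hb.1, hb.2.1, hb.2.2, Or.inl ha2⟩
  refine failsPropertyP'_of_forall_sprod_eq_one X
    (l := [(a, true), (b, false), (a⁻¹, true), (b⁻¹, false)]) (by simp) ?_ ?_ fun ξ =>
    sprod_commutator_eq_one (mem_centralizer_iff.mp hbC _ (Normal.conj_mem ‹_› a haA ξ))
  · refine kAperiodic_one_four (Ne.symm hba) hbai (inv_injective.ne (Ne.symm hba)) ?_
    simpa only [← mul_eq_one_iff_eq_inv, not_and_or] using hab2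
  · simp [ha, hb]

theorem failsPropertyP'_of_mul_self_eq_one {N : Subgroup G} [N.Normal]
    (hN : (N : Set G).Infinite) (h2 : ∀ x ∈ N, x * x = 1) : FailsPropertyP' X := by
  classical
  have hinv : ∀ x ∈ N, x⁻¹ = x := fun x hx => (eq_inv_of_mul_eq_one_left (h2 x hx)).symm
  obtain ⟨a, haN, ha⟩ := hN.exists_notMem_finset {1}
  obtain ⟨b, hbN, hb⟩ := hN.exists_notMem_finset {1, a}
  obtain ⟨c, hcN, hc⟩ := hN.exists_notMem_finset {1, a, b}
  obtain ⟨d, hdN, hd⟩ := hN.exists_notMem_finset {1, a, b, c, a * b, c * (a * b)}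
  simp only [Finset.mem_insert, Finset.mem_singleton, not_or] at ha hb hc hd
  have hab : a * b ≠ 1 := by rw [Ne, mul_eq_one_iff_eq_inv, hinv b hbN]; exact Ne.symm hb.2
  have hcd : c * d ≠ 1 := by rw [Ne, mul_eq_one_iff_eq_inv, hinv d hdN]; exact Ne.symm hd.2.2.2.1
  have habcd : a * b ≠ c * d := by
    rw [Ne, ← inv_mul_eq_iff_eq_mul, hinv c hcN]; exact Ne.symm hd.2.2.2.2.2
  refine failsPropertyP'_of_forall_sprod_eq_one X
    (l := [(a, true), (c, false), (b, true), (d, false), (a * b, true), (c * d, false)]) (by simp)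
    ?_ ?_ fun ξ => sprod_six_eq_one
      (fun x hx y hy => commute_of_mul_self_eq_one (h2 x hx) (h2 y hy) (h2 _ (N.mul_mem hx hy)))
      ξ haN hbN hcN hdN (N.mul_mem haN hbN) (N.mul_mem hcN hdN)
      (h2 _ (N.mul_mem haN hbN)) (h2 _ (N.mul_mem hcN hdN))
  · simp only [List.map_cons, List.map_nil]
    refine kAperiodic_one_six (Ne.symm hc.2.1) hc.2.2 (Ne.symm hd.2.2.1) hd.2.2.2.2.1 habcd
      (fun h => hb.2 h.1.symm) (fun h => hd.2.2.2.1 h.1.symm) (fun h => ha (right_eq_mul.mp h.1))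
      (fun h => hd.2.1 h.1.symm)
  · simp [ha, hb.1, hc.1, hd.1, hab, hcd]

end FailsPropertyP'

theorem stmt_12_general {G : Type*} [Group G] [Nontrivial G] (X : Finset G)
    (hsolv : IsSolvable G) :
    ∃ r : ℕ, 0 < r ∧ ∀ ξ : G, ∃ l : List (G × Bool), l ≠ [] ∧
      KAperiodic 1 (l.map Prod.fst) ∧
      (∀ p ∈ l, p.1 ≠ 1 ∧ wordLength (X : Set G) p.1 ≤ r) ∧
      wordLength (X : Set G) (sprod ξ l) ≤ r := by
  rcases finite_or_infinite G with hfin | hinf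
  · exact failsPropertyP'_of_finite _
  have : Group.IsSolvable G := hsolv
  obtain ⟨A, hAn, hA, hAA⟩ := IsSolvable.exists_normal_ne_bot_le_centralizer (G := G)
  have hC := infinite_centralizer A hAA
  by_cases h2 : ∀ x ∈ centralizer (A : Set G), x * x = 1
  · exact failsPropertyP'_of_mul_self_eq_one _ hC h2
  · obtain ⟨c, hc, hc2⟩ := not_forall₂.mp h2
    exact failsPropertyP'_of_mem_centralizer _ hA hC hc hc2

/-- A nontrivial finitely generated solvable group does not satisfy property `(P')`:
there is `r > 0` such that for every `ξ` there is a nonempty aperiodic sequence of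
nontrivial elements `xᵢ` with `|xᵢ| ≤ r` and signs `εᵢ` with
`|ξ^{ε₁} x₁ ⋯ ξ^{ε_k} x_k| ≤ r`. -/
theorem stmt_12 {G : Type*} [Group G] [Nontrivial G] (X : Finset G)
    (hX : Subgroup.closure (X : Set G) = ⊤) (hsolv : IsSolvable G) :
    ∃ r : ℕ, 0 < r ∧ ∀ ξ : G, ∃ l : List (G × Bool), l ≠ [] ∧
      KAperiodic 1 (l.map Prod.fst) ∧
      (∀ p ∈ l, p.1 ≠ 1 ∧ wordLength (X : Set G) p.1 ≤ r) ∧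
      wordLength (X : Set G) (sprod ξ l) ≤ r :=
  stmt_12_general X hsolv
end

section
/- Let G_{n,p} (n ≥ 2, p ≥ 1) be the relatively free group on n generators in the variety defined by the law [X^p, Y^p] = 1. Then for every ξ ∈ G_{n,p} and every m ∈ N, there exists an m-aperiodic sequence x_1, ..., x_{2k} of nontrivial elements, each of the form u^{±p} for a generator u, such that ξ x_1 ξ^{-1} x_2 ξ x_3 ξ^{-1} x_4 ⋯ ξ x_{2k-1} ξ^{-1} x_{2k} = 1. In particular, G_{n,p} does not satisfy property (P'_m) for any m. -/
open scoped commutatorElement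

/-- The relatively free group on `n` generators of the variety `[Xᵖ, Yᵖ] = 1`. -/
def Gnp (n p : ℕ) : Type :=
  FreeGroup (Fin n) ⧸ Subgroup.normalClosure
    {w : FreeGroup (Fin n) | ∃ u v : FreeGroup (Fin n), w = ⁅u ^ p, v ^ p⁆}

noncomputable instance (n p : ℕ) : Group (Gnp n p) :=
  inferInstanceAs (Group (FreeGroup (Fin n) ⧸ _))

/-- The images of the free generators in `Gnp n p`. -/
def GnpGen (n p : ℕ) (i : Fin n) : Gnp n p :=
  QuotientGroup.mk (FreeGroup.of i)

/-- The alternating product `ξ x₁ ξ⁻¹ x₂ ξ x₃ ξ⁻¹ x₄ ⋯`. -/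
def altProd {G : Type*} [Group G] (ξ : G) (l : List G) : G :=
  (l.zipIdx.map fun p => (if p.2 % 2 = 0 then ξ else ξ⁻¹) * p.1).prod

/-!
Take two generators `u, v` and the four letters `a = uᵖ, b = vᵖ, a⁻¹, b⁻¹`. The alternating
product of `a, b, a⁻¹, b⁻¹` is the commutator `⁅ξ a ξ⁻¹, b⁆`, which is trivial because
`ξ a ξ⁻¹ = (ξ u ξ⁻¹)ᵖ` and `p`-th powers commute in `G_{n,p}`. The four letters are pairwise
distinct and nontrivial, as their exponent sums in `u` and `v` show, and a word without repeated
letters contains no square, hence is `m`-aperiodic for every `m ≥ 1`.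
-/

theorem KAperiodic.of_nodup {α : Type*} {k : ℕ} {l : List α} (hk : 1 ≤ k) (hl : l.Nodup) :
    KAperiodic k l := by
  intro x y z h
  obtain ⟨k, rfl⟩ := Nat.exists_eq_add_of_le' hk
  have hyy : (y ++ y).Nodup := by
    refine List.IsInfix.nodup ⟨x, (List.replicate k y).flatten ++ z, ?_⟩ hl
    simp [h, List.replicate_succ]
  exact List.eq_nil_iff_forall_not_mem.2 fun a ha => (List.nodup_append.mp hyy).2.2 a ha a ha rfl

theorem altProd_commutator {G : Type*} [Group G] (ξ a b : G) :
    altProd ξ [a, b, a⁻¹, b⁻¹] = ⁅ξ * a * ξ⁻¹, b⁆ := by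
  simp [altProd, commutatorElement_def, mul_assoc]

namespace Gnp

theorem commute_pow_pow {n p : ℕ} (u v : Gnp n p) : Commute (u ^ p) (v ^ p) := by
  let π : FreeGroup (Fin n) →* Gnp n p := QuotientGroup.mk' _
  obtain ⟨u, rfl⟩ : ∃ w, π w = u := QuotientGroup.mk'_surjective _ u
  obtain ⟨v, rfl⟩ : ∃ w, π w = v := QuotientGroup.mk'_surjective _ v
  rw [← commutatorElement_eq_one_iff_commute, ← map_pow π, ← map_pow π, ← map_commutatorElement]
  exact (QuotientGroup.eq_one_iff _).2 (Subgroup.subset_normalClosure ⟨u, v, rfl⟩)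

noncomputable def exponentSum {n : ℕ} (p : ℕ) (i : Fin n) : Gnp n p →* Multiplicative ℤ :=
  QuotientGroup.lift _ (FreeGroup.lift fun j => Multiplicative.ofAdd (if j = i then 1 else 0)) <| by
    refine Subgroup.normalClosure_le_normal ?_
    rintro _ ⟨u, v, rfl⟩
    rw [SetLike.mem_coe, MonoidHom.mem_ker, map_commutatorElement]
    exact commutatorElement_eq_one_iff_commute.2 (Commute.all _ _)

theorem exponentSum_gen_zpow {n p : ℕ} (i j : Fin n) (c : ℤ) :
    exponentSum p i (GnpGen n p j ^ c) = Multiplicative.ofAdd (if j = i then c else 0) := by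
  rw [map_zpow]
  show (QuotientGroup.lift _ _ _ (QuotientGroup.mk (FreeGroup.of j))) ^ c = _
  rw [QuotientGroup.lift_mk, FreeGroup.lift_apply_of, ← ofAdd_zsmul]
  split_ifs <;> simp

end Gnp

/-- In `G_{n,p}` (`n ≥ 2`, `p ≥ 1`): for every `ξ` and every `m ≥ 1` there is an
`m`-aperiodic sequence `x₁, …, x_{2k}` of nontrivial elements, each a `±p`-th power
of a generator, with `ξ x₁ ξ⁻¹ x₂ ⋯ ξ x_{2k-1} ξ⁻¹ x_{2k} = 1`. Hence `G_{n,p}`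
fails property `(P'_m)` for every `m`. -/
theorem stmt_14 (n p : ℕ) (hn : 2 ≤ n) (hp : 1 ≤ p)
    (ξ : Gnp n p) (m : ℕ) (hm : 1 ≤ m) :
    ∃ (k : ℕ) (l : List (Gnp n p)), 1 ≤ k ∧ l.length = 2 * k ∧
      KAperiodic m l ∧
      (∀ x ∈ l, x ≠ 1 ∧ ∃ i : Fin n,
        x = GnpGen n p i ^ (p : ℤ) ∨ x = GnpGen n p i ^ (-(p : ℤ))) ∧
      altProd ξ l = 1 := by
  let i₀ : Fin n := ⟨0, by omega⟩
  let i₁ : Fin n := ⟨1, by omega⟩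
  let l := [GnpGen n p i₀ ^ (p : ℤ), GnpGen n p i₁ ^ (p : ℤ),
    GnpGen n p i₀ ^ (-(p : ℤ)), GnpGen n p i₁ ^ (-(p : ℤ))]
  let σ : Gnp n p → ℤ × ℤ := fun g =>
    (Multiplicative.toAdd (Gnp.exponentSum p i₀ g), Multiplicative.toAdd (Gnp.exponentSum p i₁ g))
  have hσ : l.map σ = [((p : ℤ), 0), (0, (p : ℤ)), (-(p : ℤ), 0), (0, -(p : ℤ))] := by
    simp only [l, σ, List.map_cons, List.map_nil, Gnp.exponentSum_gen_zpow]
    simp [i₀, i₁]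
  have hp₀ : p ≠ 0 := by omega
  have hσ_nodup : (l.map σ).Nodup := by simp [hσ, hp₀]
  refine ⟨2, l, one_le_two, rfl, KAperiodic.of_nodup hm (hσ_nodup.of_map σ), fun x hx => ⟨?_, ?_⟩, ?_⟩
  · rintro rfl
    have hσ_one : σ 1 ∈ l.map σ := List.mem_map_of_mem hx
    simp [hσ, σ, hp₀, eq_comm (a := (0 : ℤ))] at hσ_one
  · simp only [l, List.mem_cons, List.not_mem_nil, or_false] at hx
    rcases hx with rfl | rfl | rfl | rfl
    exacts [⟨i₀, .inl rfl⟩, ⟨i₁, .inl rfl⟩, ⟨i₀, .inr rfl⟩, ⟨i₁, .inr rfl⟩]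
  · simp only [l, zpow_neg, altProd_commutator, commutatorElement_eq_one_iff_commute,
      zpow_natCast, ← conj_pow]
    exact Gnp.commute_pow_pow _ _
end

section
/- Let R be an infinite ray with vertices 0, 1, 2, ..., let F be a finite set, and suppose each vertex n is assigned a subset F_n ⊆ F with |F_n| ≥ 2. Then one can choose, inductively in n, a 'forbidden' element z_n ∈ F_n such that for EVERY choice of x_n ∈ F_n \ {z_n}, the resulting sequence (x_n) is 4-aperiodic (contains no 5 consecutive identical blocks). -/
section ThueAux

variable {α : Type*}

/-- `f` has period `p` on the window of positions `s, s+1, ..., s+L-1`. -/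
def periodOn (f : ℕ → α) (s L p : ℕ) : Prop :=
  ∀ i, i + p < L → f (s + i) = f (s + i + p)

lemma periodOn_chain {f : ℕ → α} {s L g : ℕ} (h : periodOn f s L g) :
    ∀ m a, a + m * g < L → f (s + a) = f (s + a + m * g) := by
  intro m
  induction m with
  | zero => intro a _; simp
  | succ n ih =>
    intro a ha
    have hs : (n + 1) * g = n * g + g := by ring
    have h1 : f (s + a) = f (s + a + g) := h a (by omega)
    have h2 : f (s + (a + g)) = f (s + (a + g) + n * g) := ih (a + g) (by omega)
    have e1 : s + (a + g) = s + a + g := by omega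
    rw [e1] at h2
    have e2 : s + a + g + n * g = s + a + (n + 1) * g := by omega
    rw [e2] at h2
    rw [h1, h2]

lemma periodOn_recovery {f : ℕ → α} {s L p g : ℕ} (hg0 : 0 < g) (hgp : g < p) (hdvd : g ∣ p)
    (hL : 2 * p ≤ L) (hp : periodOn f s L p) (hsub : periodOn f s (L - p) g) :
    periodOn f s L g := by
  obtain ⟨c, hc⟩ := hdvd
  have hc' : c * g = p := by rw [hc]; ring
  have hc2 : 2 ≤ c := by
    rcases c with _ | _ | c
    · omega
    · omega
    · omega
  have hcg : (c - 1) * g + g = p := by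
    have h9 : (c - 1) * g = c * g - 1 * g := by rw [Nat.sub_mul]
    omega
  intro i hi
  by_cases h1 : i + g < L - p
  · exact hsub i h1
  · have hig : p ≤ i + g := by omega
    have hstep : f (s + (i + g - p)) = f (s + i + g) := by
      have h2 := hp (i + g - p) (by omega)
      have e : s + (i + g - p) + p = s + i + g := by omega
      rw [e] at h2; exact h2
    by_cases h2 : i < L - p
    · have hbound : (i + g - p) + (c - 1) * g < L - p := by omega
      have h3 := periodOn_chain hsub (c - 1) (i + g - p) hbound
      have e : s + (i + g - p) + (c - 1) * g = s + i := by omega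
      rw [e] at h3
      rw [← h3]; exact hstep
    · have hip : p ≤ i := by omega
      have h4 := hp (i - p) (by omega)
      have e4 : s + (i - p) + p = s + i := by omega
      rw [e4] at h4
      have h5 := hsub (i - p) (by omega)
      have e5 : s + (i - p) + g = s + (i + g - p) := by omega
      rw [e5] at h5
      calc f (s + i) = f (s + (i - p)) := h4.symm
        _ = f (s + (i + g - p)) := h5
        _ = f (s + i + g) := hstep

lemma gcd_sub_aux {p q : ℕ} (h : p ≤ q) : Nat.gcd p (q - p) = Nat.gcd p q := by
  apply Nat.dvd_antisymm
  · refine Nat.dvd_gcd (Nat.gcd_dvd_left _ _) ?_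
    have h1 := Nat.gcd_dvd_left p (q - p)
    have h2 := Nat.gcd_dvd_right p (q - p)
    have h3 : Nat.gcd p (q - p) ∣ (q - p) + p := Nat.dvd_add h2 h1
    rwa [Nat.sub_add_cancel h] at h3
  · exact Nat.dvd_gcd (Nat.gcd_dvd_left _ _)
      (Nat.dvd_sub (Nat.gcd_dvd_right p q) (Nat.gcd_dvd_left p q))

lemma fwAux {f : ℕ → α} {s : ℕ} :
    ∀ N p q L, p + q ≤ N → 0 < p → p < q → p + q - Nat.gcd p q ≤ L →
      periodOn f s L p → periodOn f s L q → periodOn f s L (Nat.gcd p q) := by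
  intro N
  induction N with
  | zero =>
    intro p q L hN hp0 hpq hL hp hq
    exfalso
    have : p + q = 0 := Nat.le_zero.mp hN
    omega
  | succ n ih =>
    intro p q L hN hp0 hpq hL hp hq
    by_cases hdvd : p ∣ q
    · rw [Nat.gcd_eq_left hdvd]; exact hp
    · have hd0 : 0 < q - p := by omega
      have hgcd : Nat.gcd p (q - p) = Nat.gcd p q := gcd_sub_aux (by omega)
      have hgp : Nat.gcd p q ∣ p := Nat.gcd_dvd_left _ _
      have hgq : Nat.gcd p q ∣ q := Nat.gcd_dvd_right _ _
      have hg0 : 0 < Nat.gcd p q := Nat.gcd_pos_of_pos_left _ hp0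
      have hgle : Nat.gcd p q ≤ p := Nat.le_of_dvd hp0 hgp
      have hgne : Nat.gcd p q ≠ p := fun h => hdvd (h ▸ hgq)
      have hgd : Nat.gcd p q ∣ (q - p) := Nat.dvd_sub hgq hgp
      have hgled : Nat.gcd p q ≤ q - p := Nat.le_of_dvd hd0 hgd
      have hpd : periodOn f s (L - p) p := fun i hi => hp i (by omega)
      have hqd : periodOn f s (L - p) (q - p) := by
        intro i hi
        have h1 := hq i (by omega)
        have h2 := hp (i + (q - p)) (by omega)
        have e1 : s + (i + (q - p)) = s + i + (q - p) := by omega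
        rw [e1] at h2
        have e2 : s + i + (q - p) + p = s + i + q := by omega
        rw [e2] at h2
        rw [h1]; exact h2.symm
      have hrec : periodOn f s (L - p) (Nat.gcd p q) := by
        rcases lt_trichotomy p (q - p) with h | h | h
        · have hx := ih p (q - p) (L - p) (by omega) hp0 h (by rw [hgcd]; omega) hpd hqd
          rwa [hgcd] at hx
        · exfalso
          apply hdvd
          exact ⟨2, by omega⟩
        · have hx := ih (q - p) p (L - p) (by omega) hd0 h
            (by rw [Nat.gcd_comm, hgcd]; omega) hqd hpd
          rwa [Nat.gcd_comm, hgcd] at hx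
      exact periodOn_recovery hg0 (lt_of_le_of_ne hgle hgne) hgp (by omega) hp hrec

lemma fineWilf {f : ℕ → α} {s : ℕ} (p q L : ℕ) (hp0 : 0 < p) (hq0 : 0 < q)
    (hL : p + q - Nat.gcd p q ≤ L)
    (hp : periodOn f s L p) (hq : periodOn f s L q) :
    periodOn f s L (Nat.gcd p q) := by
  rcases lt_trichotomy p q with h | h | h
  · exact fwAux (p + q) p q L le_rfl hp0 h hL hp hq
  · subst h; rwa [Nat.gcd_self]
  · rw [Nat.gcd_comm]
    exact fwAux (q + p) q p L le_rfl hq0 h (by rw [Nat.gcd_comm]; omega) hq hp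


lemma slot_unique {t j k : ℕ} (hj : t % 2 ^ (j + 1) = 2 ^ j) (hk : t % 2 ^ (k + 1) = 2 ^ k) :
    j = k := by
  have key : ∀ a b, a < b → t % 2 ^ (a + 1) = 2 ^ a → t % 2 ^ (b + 1) = 2 ^ b → False := by
    intro a b hab ha hb
    have h1 : t = 2 ^ (b + 1) * (t / 2 ^ (b + 1)) + 2 ^ b := by
      conv_lhs => rw [← Nat.div_add_mod t (2 ^ (b + 1))]
      rw [hb]
    have h2 : (2 : ℕ) ^ (a + 1) ∣ t := by
      rw [h1]
      exact Nat.dvd_add (Dvd.dvd.mul_right (pow_dvd_pow 2 (by omega)) _)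
        (pow_dvd_pow 2 (by omega))
    obtain ⟨c, hcc⟩ := h2
    have h3 : t % 2 ^ (a + 1) = 0 := by rw [hcc]; exact Nat.mul_mod_right _ _
    have h4 : (0:ℕ) < 2 ^ a := pow_pos (by norm_num) a
    omega
  rcases lt_trichotomy j k with h | h | h
  · exact absurd (key j k h hj hk) (fun h => h)
  · exact h
  · exact absurd (key k j h hk hj) (fun h => h)

/-- `p` is a "candidate" period at time `t` (for the word `f`). -/
def CandAt (f : ℕ → α) (t p : ℕ) : Prop :=
  0 < p ∧ t % 2 ^ (Nat.log 2 p + 1) = 2 ^ (Nat.log 2 p) ∧ 3 * p ≤ t ∧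
    ∀ j, j < 2 * p → f (t - 3 * p + j) = f (t - 3 * p + j + p)

lemma two_cands_bad {f : ℕ → α} {t a b : ℕ} (ha : CandAt f t a) (hb : CandAt f t b)
    (hab : a < b) (hb2 : b < 2 * a) :
    ∃ g, 0 < g ∧ 5 * g ≤ t ∧ 5 * g ≤ 3 * a ∧
      ∀ j, j < 4 * g → f (t - 5 * g + j) = f (t - 5 * g + j + g) := by
  obtain ⟨ha0, -, h3a, hpa⟩ := ha
  obtain ⟨hb0, -, h3b, hpb⟩ := hb
  have hPa : periodOn f (t - 3 * a) (3 * a) a := by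
    intro i hi; exact hpa i (by omega)
  have hPb : periodOn f (t - 3 * a) (3 * a) b := by
    intro i hi
    have h := hpb (3 * b - 3 * a + i) (by omega)
    have e1 : t - 3 * b + (3 * b - 3 * a + i) = t - 3 * a + i := by omega
    rw [e1] at h; exact h
  have hnd : ¬ a ∣ b := by
    rintro ⟨c, rfl⟩
    rcases c with _ | _ | c
    · omega
    · omega
    · have h9 : a * (c + 1 + 1) = a * c + 2 * a := by ring
      omega
  have hg0 : 0 < Nat.gcd a b := Nat.gcd_pos_of_pos_left _ ha0
  have hgdvda : Nat.gcd a b ∣ a := Nat.gcd_dvd_left _ _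
  have hglt : Nat.gcd a b < a := by
    rcases lt_or_eq_of_le (Nat.le_of_dvd ha0 hgdvda) with h | h
    · exact h
    · exact absurd (h ▸ Nat.gcd_dvd_right a b) hnd
  have hg2 : 2 * Nat.gcd a b ≤ a := by
    obtain ⟨m, hm⟩ := hgdvda
    have hm2 : 2 ≤ m := by
      rcases m with _ | _ | m
      · omega
      · omega
      · omega
    have h9 := Nat.mul_le_mul_left (Nat.gcd a b) hm2
    omega
  have hfw := fineWilf a b (3 * a) ha0 (by omega) (by omega) hPa hPb
  refine ⟨Nat.gcd a b, hg0, by omega, by omega, ?_⟩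
  intro j hj
  have h := hfw (3 * a - 5 * Nat.gcd a b + j) (by omega)
  have e1 : t - 3 * a + (3 * a - 5 * Nat.gcd a b + j) = t - 5 * Nat.gcd a b + j := by omega
  rw [e1] at h; exact h


def extFn {α : Type*} (e0 : α) (t : ℕ) (prev : Fin t → α) : ℕ → α :=
  fun i => if h : i < t then prev ⟨i, h⟩ else e0

open Classical in
noncomputable def stratZ {α : Type*} [DecidableEq α] (Fsub : ℕ → Finset α) (e : ℕ → α) :
    (t : ℕ) → (Fin t → α) → α := fun t prev =>
  if hc : ∃ p, CandAt (extFn (e 0) t prev) t p then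
    if extFn (e 0) t prev (t - Classical.choose hc) ∈ Fsub t then
      extFn (e 0) t prev (t - Classical.choose hc)
    else e t
  else e t


end ThueAux

/-- For an infinite ray with vertex set `ℕ`, a finite set `F` and subsets
`Fsub n ⊆ F` with `|Fsub n| ≥ 2`, one can choose inductively (depending on the
previously chosen values) a forbidden element `z_n ∈ Fsub n` such that every
sequence `x` with `x n ∈ Fsub n \ {z_n}` is 4-aperiodic (no 5 consecutive
identical blocks). -/
theorem stmt_15 {α : Type*} [DecidableEq α] (F : Finset α)
    (Fsub : ℕ → Finset α) (hsub : ∀ n, Fsub n ⊆ F) (hcard : ∀ n, 2 ≤ (Fsub n).card) :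
    ∃ z : (n : ℕ) → (Fin n → α) → α,
      (∀ n prev, z n prev ∈ Fsub n) ∧
      ∀ x : ℕ → α, (∀ n, x n ∈ Fsub n) →
        (∀ n, x n ≠ z n (fun i => x i)) →
        ∀ i p : ℕ, 0 < p → ∃ j < 4 * p, x (i + p + j) ≠ x (i + j) := by
  classical
  have hne : ∀ n, (Fsub n).Nonempty := by
    intro n
    apply Finset.card_pos.mp
    have := hcard n
    omega
  choose e he using hne
  refine ⟨stratZ Fsub e, ?_, ?_⟩
  · intro n prev
    unfold stratZ
    split_ifs with h1 h2
    · exact h2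
    · exact he n
    · exact he n
  · intro x hx hz i p hp
    by_contra hcon
    push_neg at hcon
    have hbad : ∃ T : ℕ, ∃ r : ℕ, 0 < r ∧ 5 * r ≤ T + 1 ∧
        ∀ j, j < 4 * r → x (T + 1 - 5 * r + j) = x (T + 1 - 5 * r + j + r) := by
      refine ⟨i + 5 * p - 1, p, hp, by omega, ?_⟩
      intro j hj
      have h1 := hcon j hj
      have e1 : i + 5 * p - 1 + 1 - 5 * p + j = i + j := by omega
      rw [e1]
      have e2 : i + j + p = i + p + j := by omega
      rw [e2, h1]
    set T0 := Nat.find hbad with hT0def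
    have hspec := Nat.find_spec hbad
    have hmin : ∀ m, m < T0 → ¬ ∃ r : ℕ, 0 < r ∧ 5 * r ≤ m + 1 ∧
        ∀ j, j < 4 * r → x (m + 1 - 5 * r + j) = x (m + 1 - 5 * r + j + r) :=
      fun m hm => Nat.find_min hbad hm
    obtain ⟨q, hq0, hq5, hper⟩ := hspec
    set k := Nat.log 2 q with hk
    have h2k : 2 ^ k ≤ q := Nat.pow_log_le_self 2 (by omega)
    have hq2 : q < 2 ^ (k + 1) := Nat.lt_pow_succ_log_self (by norm_num) q
    have hpow : (2:ℕ) ^ (k + 1) = 2 * 2 ^ k := by rw [pow_succ]; ring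
    have hTk : 2 ^ k ≤ T0 := by omega
    have hdm := Nat.div_add_mod (T0 - 2 ^ k) (2 ^ (k + 1))
    set r := (T0 - 2 ^ k) % 2 ^ (k + 1) with hrdef
    have hrlt : r < 2 ^ (k + 1) := Nat.mod_lt _ (by positivity)
    set ts := T0 - r with htsdef
    have h2kpos : (0:ℕ) < 2 ^ k := pow_pos (by norm_num) k
    have htse : ts = 2 ^ k + 2 ^ (k + 1) * ((T0 - 2 ^ k) / 2 ^ (k + 1)) := by omega
    have hslot : ts % 2 ^ (k + 1) = 2 ^ k := by
      rw [htse, Nat.add_mul_mod_self_left]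
      exact Nat.mod_eq_of_lt (by omega)
    have htle : ts ≤ T0 := by omega
    have hgap : T0 + 1 ≤ ts + 2 * q := by omega
    have ht3q : 3 * q ≤ ts := by omega
    have hfx : ∀ m, m < ts → extFn (e 0) ts (fun i : Fin ts => x ↑i) m = x m := by
      intro m hm
      simp only [extFn]
      rw [dif_pos hm]
    have hcq : CandAt (extFn (e 0) ts (fun i : Fin ts => x ↑i)) ts q := by
      refine ⟨hq0, hslot, ht3q, ?_⟩
      intro j hj
      rw [hfx _ (by omega), hfx _ (by omega)]
      have h1 := hper (ts + 2 * q + j - (T0 + 1)) (by omega)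
      have e1 : T0 + 1 - 5 * q + (ts + 2 * q + j - (T0 + 1)) = ts - 3 * q + j := by omega
      rw [e1] at h1
      exact h1
    have hc : ∃ p', CandAt (extFn (e 0) ts (fun i : Fin ts => x ↑i)) ts p' := ⟨q, hcq⟩
    have hzt := hz ts
    unfold stratZ at hzt
    rw [dif_pos hc] at hzt
    have hp0 := Classical.choose_spec hc
    obtain ⟨hp00, hslot0, h3p0, hper0⟩ := hp0
    have hk0 : Nat.log 2 (Classical.choose hc) = k := slot_unique hslot0 hslot
    have hp2k : 2 ^ k ≤ Classical.choose hc := by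
      rw [← hk0]; exact Nat.pow_log_le_self 2 (by omega)
    have hp02 : Classical.choose hc < 2 ^ (k + 1) := by
      rw [← hk0]; exact Nat.lt_pow_succ_log_self (by norm_num) _
    by_cases hpq : Classical.choose hc = q
    · -- the strategy forbade x (ts - q), contradiction with periodicity
      rw [hpq] at hzt
      rw [hfx _ (by omega)] at hzt
      have hkey : x (ts - q) = x ts := by
        have h1 := hper (ts + 4 * q - (T0 + 1)) (by omega)
        have e1 : T0 + 1 - 5 * q + (ts + 4 * q - (T0 + 1)) = ts - q := by omega
        rw [e1] at h1
        have e2 : ts - q + q = ts := by omega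
        rw [e2] at h1
        exact h1
      by_cases hmem : x (ts - q) ∈ Fsub ts
      · rw [if_pos hmem] at hzt
        exact hzt hkey.symm
      · exact hmem (by rw [hkey]; exact hx ts)
    · -- two distinct same-level candidates: earlier 5th power, contradiction
      have hcp0 : CandAt (extFn (e 0) ts (fun i : Fin ts => x ↑i)) ts (Classical.choose hc) :=
        ⟨hp00, hslot0, h3p0, hper0⟩
      have hcontra : ∃ g, 0 < g ∧ 5 * g ≤ ts ∧
          ∀ j, j < 4 * g → extFn (e 0) ts (fun i : Fin ts => x ↑i) (ts - 5 * g + j)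
            = extFn (e 0) ts (fun i : Fin ts => x ↑i) (ts - 5 * g + j + g) := by
        rcases Nat.lt_or_ge (Classical.choose hc) q with h | h
        · obtain ⟨g, hg0, hg5t, hg3a, hgper⟩ := two_cands_bad hcp0 hcq h (by omega)
          exact ⟨g, hg0, hg5t, hgper⟩
        · have h' : q < Classical.choose hc := by omega
          obtain ⟨g, hg0, hg5t, hg3a, hgper⟩ := two_cands_bad hcq hcp0 h' (by omega)
          exact ⟨g, hg0, hg5t, hgper⟩
      obtain ⟨g, hg0, hg5t, hgper⟩ := hcontra
      apply hmin (ts - 1) (by omega)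
      refine ⟨g, hg0, by omega, ?_⟩
      intro j hj
      have h1 := hgper j hj
      rw [hfx _ (by omega), hfx _ (by omega)] at h1
      have e1 : ts - 1 + 1 - 5 * g + j = ts - 5 * g + j := by omega
      rw [e1]
      exact h1
end
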